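/- arXiv:2308.12244 — 5 statements merged into one kernel-verified Lean document; each statement's English description precedes it below -/
import Mathlib

section
/- Let S ⊂ ℂ^× and let n be a positive integer. Suppose that for every k ∈ {1, …, n} there are only finitely many k-tuples (s₁, …, s_k) ∈ S^k such that s₁, …, s_k are pairwise distinct and the set {s₁, …, s_k} is minimally multiplicatively dependent. Then there are only finitely many n-tuples (s₁, …, sₙ) ∈ Sⁿ such that s₁, …, sₙ are pairwise distinct and ∏_{i=1}^n sᵢ^{aᵢ} = 1 for some a₁, …, aₙ ∈ ℤ ∖ {0}. -/
open UpperHalfPlane Matrix MatrixGroups Complex Filter Polynomial IntermediateField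
open scoped Manifold Topology

noncomputable section

namespace SingMod

/-- `ρ = exp(2πi/3)` as a point of the upper half plane. -/
def rho : UpperHalfPlane := ⟨Complex.exp (2 * Real.pi * Complex.I / 3), by
  rw [Complex.exp_im]
  have h1 : (2 * (Real.pi : ℂ) * Complex.I / 3).re = 0 := by simp
  have h2 : (2 * (Real.pi : ℂ) * Complex.I / 3).im = 2 * Real.pi / 3 := by simp
  rw [h1, h2, Real.exp_zero, one_mul]
  apply Real.sin_pos_of_pos_of_lt_pi
  · positivity
  · nlinarith [Real.pi_pos]⟩

/-- The characterizing properties of the modular `j`-function: it is holomorphic on `ℍ`,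
invariant under the action of `SL₂(ℤ)`, has a simple pole at `i∞`, and satisfies
`j(i) = 1728` and `j(ρ) = 0`. -/
structure IsJFunction (j : UpperHalfPlane → ℂ) : Prop where
  holo : MDifferentiable 𝓘(ℂ) 𝓘(ℂ) j
  invariant : ∀ (γ : SL(2, ℤ)) (z : UpperHalfPlane), j (γ • z) = j z
  simple_pole : ∃ c : ℂ, c ≠ 0 ∧
    Filter.Tendsto (fun z : UpperHalfPlane => j z * Complex.exp (2 * Real.pi * Complex.I * z))
      UpperHalfPlane.atImInfty (nhds c)
  at_I : j UpperHalfPlane.I = 1728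
  at_rho : j rho = 0

/-- `x` is a singular modulus (w.r.t. a function `j`): `x = j τ` for some `τ ∈ ℍ` with
`[ℚ(τ) : ℚ] = 2`. -/
def IsSingularModulus (j : UpperHalfPlane → ℂ) (x : ℂ) : Prop :=
  ∃ τ : UpperHalfPlane, Module.finrank ℚ ℚ⟮(τ : ℂ)⟯ = 2 ∧ j τ = x

/-- `D` is the discriminant of the singular modulus `x`: `D = b² - 4ac` where `a, b, c` are
coprime integers, not all zero, with `aτ² + bτ + c = 0` for some `τ ∈ ℍ` with `j τ = x`. -/
def IsDiscOf (j : UpperHalfPlane → ℂ) (D : ℤ) (x : ℂ) : Prop :=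
  ∃ (τ : UpperHalfPlane) (a b c : ℤ), j τ = x ∧ Int.gcd (Int.gcd a b) c = 1 ∧
    (a : ℂ) * (τ : ℂ) ^ 2 + (b : ℂ) * (τ : ℂ) + (c : ℂ) = 0 ∧ D = b ^ 2 - 4 * a * c

lemma det_map_cast (g : Matrix (Fin 2) (Fin 2) ℚ) :
    (g.map ((↑) : ℚ → ℝ)).det = (g.det : ℝ) := by
  rw [show ((↑) : ℚ → ℝ) = ⇑(Rat.castHom ℝ) from rfl, ← RingHom.mapMatrix_apply,
    ← RingHom.map_det]

/-- A rational `2×2` matrix of positive determinant, as an element of `GL(2,ℝ)⁺`. -/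
def toGLPos (g : Matrix (Fin 2) (Fin 2) ℚ) (hg : 0 < g.det) : GL(2, ℝ)⁺ :=
  ⟨Matrix.GeneralLinearGroup.mkOfDetNeZero (g.map ((↑) : ℚ → ℝ))
      (by rw [det_map_cast]; exact_mod_cast ne_of_gt hg),
   by
    rw [Matrix.mem_glpos, Matrix.GeneralLinearGroup.val_det_apply]
    show (0 : ℝ) < (g.map ((↑) : ℚ → ℝ)).det
    rw [det_map_cast]
    exact_mod_cast hg⟩

set_option synthInstance.maxHeartbeats 400000 in
/-- The action of a rational matrix of positive determinant on `ℍ` by fractional linear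
transformations. -/
def qSMul (g : Matrix (Fin 2) (Fin 2) ℚ) (hg : 0 < g.det) (z : UpperHalfPlane) :
    UpperHalfPlane :=
  toGLPos g hg • z

/-- The action of an integer matrix of positive determinant on `ℍ` by fractional linear
transformations. -/
def zSMul (g : Matrix (Fin 2) (Fin 2) ℤ) (hg : 0 < g.det) (z : UpperHalfPlane) :
    UpperHalfPlane :=
  qSMul (g.map ((↑) : ℤ → ℚ))
    (by
      have : (g.map ((↑) : ℤ → ℚ)).det = (g.det : ℚ) := by
        rw [show ((↑) : ℤ → ℚ) = ⇑(Int.castRingHom ℚ) from rfl, ← RingHom.mapMatrix_apply,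
          ← RingHom.map_det]
      rw [this]; exact_mod_cast hg) z

/-- The action of an arbitrary integer matrix on `ℍ`: fractional linear transformation when the
determinant is positive, junk value otherwise. -/
def act (g : Matrix (Fin 2) (Fin 2) ℤ) (z : UpperHalfPlane) : UpperHalfPlane :=
  if hg : 0 < g.det then zSMul g hg z else z

/-- The set `C(N)` of upper-triangular integer matrices `((a,b),(0,d))` with `ad = N`, `a > 0`,
`0 ≤ b < d` and `gcd(a,b,d) = 1`. -/
def Cset (N : ℤ) : Set (Matrix (Fin 2) (Fin 2) ℤ) :=
  {g | g 1 0 = 0 ∧ g 0 0 * g 1 1 = N ∧ 0 < g 0 0 ∧ 0 ≤ g 0 1 ∧ g 0 1 < g 1 1 ∧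
    Int.gcd (Int.gcd (g 0 0) (g 0 1)) (g 1 1) = 1}

/-- The statement that `Φ` is the family of modular polynomials (w.r.t. `j`):
for each `N > 0`, `Φ N` is a two-variable integer polynomial with
`Φ_N(X, j(z)) = ∏_{g ∈ C(N)} (X - j(gz))` for all `z ∈ ℍ` and `X ∈ ℂ`. -/
def IsModularPolyFamily (j : UpperHalfPlane → ℂ) (Φ : ℤ → MvPolynomial (Fin 2) ℤ) : Prop :=
  ∀ N : ℤ, 0 < N → ∀ (z : UpperHalfPlane) (X : ℂ),
    MvPolynomial.aeval ![X, j z] (Φ N) = ∏ᶠ g ∈ Cset N, (X - j (act g z))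

/-- The polynomial `F_N(X) = Φ_N(X, X)`, as a one-variable integer polynomial. -/
def FPoly (Φ : ℤ → MvPolynomial (Fin 2) ℤ) (N : ℤ) : Polynomial ℤ :=
  MvPolynomial.aeval (fun _ : Fin 2 => (Polynomial.X : Polynomial ℤ)) (Φ N)

/-- A function `ℍ → ℂ` is constant. -/
def IsConstFun (f : UpperHalfPlane → ℂ) : Prop := ∃ c : ℂ, ∀ z, f z = c

/-- `f` is a `j`-map: either constantly equal to a singular modulus, or of the form
`z ↦ j (g z)` for some `g ∈ GL₂⁺(ℚ)`. -/
def IsJMap (j : UpperHalfPlane → ℂ) (f : UpperHalfPlane → ℂ) : Prop :=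
  (∃ x : ℂ, IsSingularModulus j x ∧ ∀ z, f z = x) ∨
  (∃ (g : Matrix (Fin 2) (Fin 2) ℚ) (hg : 0 < g.det), ∀ z, f z = j (qSMul g hg z))

/-- `T ⊆ ℂ^{n+1}` is a multiplicative special curve: `T` is the image of
`z ↦ (f₁(z), …, fₙ(z), f(z))` for pairwise distinct `j`-maps `f₁, …, fₙ, f`, at least one
non-constant, such that `∏ᵢ (fᵢ(z) - f(z))^{aᵢ} = 1` for all `z` and some nonzero integers `aᵢ`. -/
def IsMultSpecialCurve (j : UpperHalfPlane → ℂ) (n : ℕ) (T : Set (Fin (n + 1) → ℂ)) : Prop :=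
  ∃ (f : Fin n → UpperHalfPlane → ℂ) (f₀ : UpperHalfPlane → ℂ),
    (∀ i, IsJMap j (f i)) ∧ IsJMap j f₀ ∧
    (∀ i k, i ≠ k → f i ≠ f k) ∧ (∀ i, f i ≠ f₀) ∧
    ((∃ i, ¬ IsConstFun (f i)) ∨ ¬ IsConstFun f₀) ∧
    (∃ a : Fin n → ℤ, (∀ i, a i ≠ 0) ∧
      ∀ z, ∏ i : Fin n, (f i z - f₀ z) ^ (a i) = 1) ∧
    T = {v | ∃ z : UpperHalfPlane, v = Fin.snoc (fun i => f i z) (f₀ z)}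

/-- A finite set `S ⊂ ℂ` is multiplicatively dependent. -/
def IsMultDep (S : Finset ℂ) : Prop :=
  ∃ a : ℂ → ℤ, (∃ x ∈ S, a x ≠ 0) ∧ ∏ x ∈ S, x ^ (a x) = 1

/-- A finite set `S ⊂ ℂ` is minimally multiplicatively dependent: it is multiplicatively
dependent and no non-empty proper subset of it is multiplicatively dependent. -/
def IsMinMultDep (S : Finset ℂ) : Prop :=
  IsMultDep S ∧ ∀ T : Finset ℂ, T ⊂ S → T.Nonempty → ¬ IsMultDep T

/-- Functions `h₁, …, hₙ : ℍ → ℂ` are multiplicatively independent modulo constants. -/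
def MultIndepModConst {n : ℕ} (h : Fin n → UpperHalfPlane → ℂ) : Prop :=
  ∀ a : Fin n → ℤ, (∃ i, a i ≠ 0) → ¬ IsConstFun (fun z => ∏ i : Fin n, (h i z) ^ (a i))

/-- The fundamental domain `𝔉_j` for the action of `SL₂(ℤ)` on `ℍ`. -/
def Fdj : Set UpperHalfPlane :=
  {z | -(1/2) ≤ z.re ∧ z.re < 1/2 ∧ 1 ≤ ‖(z : ℂ)‖ ∧
    (‖(z : ℂ)‖ = 1 → z.re ≤ 0)}


/-- Every element appearing with nonzero exponent in a multiplicative relation on a finite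
set of nonzero complex numbers lies in a minimally multiplicatively dependent subset. -/
lemma exists_minMultDep_subset (F : Finset ℂ) (h0 : ∀ y ∈ F, y ≠ (0 : ℂ)) (x : ℂ)
    (hx : x ∈ F) (a : ℂ → ℤ) (hax : a x ≠ 0) (hprod : ∏ y ∈ F, y ^ a y = 1) :
    ∃ T : Finset ℂ, T ⊆ F ∧ x ∈ T ∧ IsMinMultDep T := by
  classical
  have filt : ∀ (G : Finset ℂ) (e : ℂ → ℤ),
      ∏ y ∈ G.filter (fun y => e y ≠ 0), y ^ e y = ∏ y ∈ G, y ^ e y := by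
    intro G e
    refine Finset.prod_filter_of_ne ?_
    intro y _ hne h
    exact hne (by rw [h, zpow_zero])
  set P : Finset ℂ → Prop := fun T => T ⊆ F ∧ x ∈ T ∧
    ∃ b : ℂ → ℤ, (∀ y ∈ T, b y ≠ 0) ∧ ∏ y ∈ T, y ^ b y = 1 with hPdef
  have h0' : P (F.filter fun y => a y ≠ 0) := by
    refine ⟨Finset.filter_subset _ _, Finset.mem_filter.2 ⟨hx, hax⟩, a,
      fun y hy => (Finset.mem_filter.1 hy).2, ?_⟩
    rw [filt]; exact hprod
  have hex : ∃ m : ℕ, ∃ T : Finset ℂ, P T ∧ T.card = m := ⟨_, _, h0', rfl⟩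
  obtain ⟨T, hPT, hcardT⟩ := Nat.find_spec hex
  have hmin : ∀ T' : Finset ℂ, P T' → T.card ≤ T'.card := by
    intro T' hT'
    rw [hcardT]
    exact Nat.find_min' hex ⟨T', hT', rfl⟩
  obtain ⟨hTF, hxT, b, hb, hbprod⟩ := hPT
  refine ⟨T, hTF, hxT, ⟨⟨b, ⟨x, hxT, hb x hxT⟩, hbprod⟩, ?_⟩⟩
  intro U hUT _ hUdep
  obtain ⟨c, ⟨y₀, hy₀, hcy₀⟩, hcprod⟩ := hUdep
  set U' := U.filter (fun y => c y ≠ 0) with hU'def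
  have hU'prod : ∏ y ∈ U', y ^ c y = 1 := by rw [hU'def, filt]; exact hcprod
  have hU'U : U' ⊆ U := Finset.filter_subset _ _
  have hU'T : U' ⊆ T := hU'U.trans hUT.subset
  have hy₀' : y₀ ∈ U' := Finset.mem_filter.2 ⟨hy₀, hcy₀⟩
  by_cases hxU' : x ∈ U'
  · have hPU' : P U' := ⟨hU'T.trans hTF, hxU',
      c, fun y hy => (Finset.mem_filter.1 hy).2, hU'prod⟩
    have h1 := hmin U' hPU'
    have hlt : U'.card < T.card :=
      lt_of_le_of_lt (Finset.card_le_card hU'U) (Finset.card_lt_card hUT)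
    omega
  · set c₀ : ℂ → ℤ := fun y => if y ∈ U' then c y else 0 with hc₀def
    set d : ℂ → ℤ := fun y => c y₀ * b y - b y₀ * c₀ y with hddef
    have hy₀T : y₀ ∈ T := hU'T hy₀'
    have hprodc₀ : ∏ y ∈ T, y ^ c₀ y = 1 := by
      have h1 : ∏ y ∈ T, y ^ c₀ y = ∏ y ∈ U', y ^ c₀ y :=
        (Finset.prod_subset hU'T (fun y _ hy => by simp [hc₀def, hy])).symm
      have h2 : ∏ y ∈ U', y ^ c₀ y = ∏ y ∈ U', y ^ c y :=
        Finset.prod_congr rfl (fun y hy => by simp [hc₀def, hy])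
      rw [h1, h2, hU'prod]
    have hdprod : ∏ y ∈ T, y ^ d y = 1 := by
      have key : ∀ y ∈ T, y ^ d y = (y ^ b y) ^ c y₀ * ((y ^ c₀ y) ^ b y₀)⁻¹ := by
        intro y hy
        have hy0 : y ≠ 0 := h0 y (hTF hy)
        rw [hddef]
        simp only
        rw [zpow_sub₀ hy0, mul_comm (c y₀) (b y), mul_comm (b y₀) (c₀ y), _root_.zpow_mul, _root_.zpow_mul, div_eq_mul_inv]
      rw [Finset.prod_congr rfl key, Finset.prod_mul_distrib, Finset.prod_inv_distrib,
        Finset.prod_zpow, Finset.prod_zpow, hbprod, hprodc₀, _root_.one_zpow, _root_.one_zpow, inv_one, mul_one]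
    set T' := T.filter (fun y => d y ≠ 0) with hT'def
    have hT'prod : ∏ y ∈ T', y ^ d y = 1 := by rw [hT'def, filt]; exact hdprod
    have hxT' : x ∈ T' := by
      refine Finset.mem_filter.2 ⟨hxT, ?_⟩
      have hcx : c₀ x = 0 := if_neg hxU'
      rw [hddef]
      simp only [hcx, mul_zero, sub_zero]
      exact mul_ne_zero hcy₀ (hb x hxT)
    have hy₀T' : y₀ ∉ T' := by
      simp only [hT'def, Finset.mem_filter, not_and, not_not]
      intro _
      rw [hddef]
      have : c₀ y₀ = c y₀ := if_pos hy₀'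
      simp only [this]
      ring
    have hPT' : P T' := ⟨(Finset.filter_subset _ _).trans hTF, hxT',
      d, fun y hy => (Finset.mem_filter.1 hy).2, hT'prod⟩
    have h1 := hmin T' hPT'
    have hlt : T'.card < T.card :=
      Finset.card_lt_card ((Finset.ssubset_iff_of_subset (Finset.filter_subset _ _)).2
        ⟨y₀, hy₀T, hy₀T'⟩)
    omega

/-- **Proposition.** Let `S ⊆ ℂ^×` and `n > 0`. If for every `k ∈ {1, …, n}` there are only
finitely many `k`-tuples of pairwise distinct elements of `S` forming a minimally
multiplicatively dependent set, then there are only finitely many `n`-tuples of pairwise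
distinct elements of `S` satisfying `∏ᵢ sᵢ^{aᵢ} = 1` with all `aᵢ ∈ ℤ ∖ {0}`. -/
theorem min_dep_finiteness_implies_finiteness (S : Set ℂ) (hS : (0 : ℂ) ∉ S)
    (n : ℕ) (hn : 0 < n)
    (hfin : ∀ k : ℕ, 1 ≤ k → k ≤ n →
      {s : Fin k → ℂ | (∀ i, s i ∈ S) ∧ Function.Injective s ∧
        IsMinMultDep (Finset.image s Finset.univ)}.Finite) :
    {s : Fin n → ℂ | (∀ i, s i ∈ S) ∧ Function.Injective s ∧
      ∃ a : Fin n → ℤ, (∀ i, a i ≠ 0) ∧ ∏ i : Fin n, (s i) ^ (a i) = 1}.Finite := by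
  classical
  -- the set of all values appearing in some minimally dependent tuple
  set V : Set ℂ := ⋃ k ∈ Set.Icc 1 n, ⋃ u ∈ {u : Fin k → ℂ | (∀ i, u i ∈ S) ∧
      Function.Injective u ∧ IsMinMultDep (Finset.image u Finset.univ)}, Set.range u with hVdef
  have hVfin : V.Finite := by
    refine Set.Finite.biUnion (Set.finite_Icc 1 n) (fun k hk => ?_)
    exact Set.Finite.biUnion (hfin k hk.1 hk.2) (fun u _ => Set.finite_range u)
  refine Set.Finite.subset (Set.Finite.pi (fun _ : Fin n => hVfin)) ?_
  rintro s ⟨hsS, hsinj, a, ha0, haprod⟩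
  rw [Set.mem_pi]
  intro i _
  -- transfer the relation to the image finset
  set F : Finset ℂ := Finset.image s Finset.univ with hFdef
  have h0F : ∀ y ∈ F, y ≠ (0 : ℂ) := by
    intro y hy hy0
    obtain ⟨i', _, rfl⟩ := Finset.mem_image.1 hy
    exact hS (hy0 ▸ hsS i')
  set A : ℂ → ℤ := fun x => if h : ∃ i', s i' = x then a h.choose else 0 with hAdef
  have hAs : ∀ i', A (s i') = a i' := by
    intro i'
    have h : ∃ i'', s i'' = s i' := ⟨i', rfl⟩
    have : A (s i') = a h.choose := dif_pos h
    rw [this, hsinj h.choose_spec]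
  have hAprod : ∏ y ∈ F, y ^ A y = 1 := by
    rw [hFdef, Finset.prod_image (fun i' _ i'' _ h => hsinj h)]
    rw [← haprod]
    exact Finset.prod_congr rfl (fun i' _ => by rw [hAs])
  have hsiF : s i ∈ F := Finset.mem_image.2 ⟨i, Finset.mem_univ i, rfl⟩
  obtain ⟨T, hTF, hxT, hTdep⟩ := exists_minMultDep_subset F h0F (s i) hsiF A
    (by rw [hAs]; exact ha0 i) hAprod
  -- enumerate `T` as a tuple
  set k := T.card with hkdef
  set t : Fin k → ℂ := fun i' => ((T.equivFin.symm i' : T) : ℂ) with htdef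
  have htinj : Function.Injective t := fun i' i'' h =>
    T.equivFin.symm.injective (Subtype.coe_injective h)
  have htimg : Finset.image t Finset.univ = T := by
    ext y
    simp only [Finset.mem_image, Finset.mem_univ, true_and]
    constructor
    · rintro ⟨i', rfl⟩
      exact (T.equivFin.symm i').2
    · intro hy
      exact ⟨T.equivFin ⟨y, hy⟩, by simp [htdef]⟩
  have htS : ∀ i', t i' ∈ S := by
    intro i'
    have : t i' ∈ F := hTF (T.equivFin.symm i').2
    obtain ⟨i'', _, h⟩ := Finset.mem_image.1 this
    exact h ▸ hsS i''
  have hk1 : 1 ≤ k := Finset.card_pos.2 ⟨s i, hxT⟩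
  have hkn : k ≤ n := by
    have h1 : F.card = n := by
      rw [hFdef, Finset.card_image_of_injective _ hsinj, Finset.card_univ, Fintype.card_fin]
    calc k ≤ F.card := Finset.card_le_card hTF
    _ = n := h1
  have htmem : t ∈ {u : Fin k → ℂ | (∀ i', u i' ∈ S) ∧
      Function.Injective u ∧ IsMinMultDep (Finset.image u Finset.univ)} :=
    ⟨htS, htinj, htimg ▸ hTdep⟩
  have hsit : s i ∈ Set.range t := by
    have : s i ∈ Finset.image t Finset.univ := htimg ▸ hxT
    obtain ⟨i', _, h⟩ := Finset.mem_image.1 this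
    exact ⟨i', h⟩
  exact Set.mem_biUnion (Set.mem_Icc.2 ⟨hk1, hkn⟩) (Set.mem_biUnion htmem hsit)

end SingMod
end
end

section
/- Let z₀ ∈ 𝔉_j. If re z₀ ≠ −1/2, then the SL₂(ℤ)-orbit of z₀ in ℍ equals {z₀ + k : k ∈ ℤ} ∪ {−1/z₀ + k : k ∈ ℤ} ∪ {w ∈ ℍ : w is in the orbit of z₀ and im w < im(−1/z₀)}. If re z₀ = −1/2, then the SL₂(ℤ)-orbit of z₀ equals {z₀ + k : k ∈ ℤ} ∪ {−1/z₀ + k : k ∈ ℤ} ∪ {−1/(z₀+1) + k : k ∈ ℤ} ∪ {w ∈ ℍ : w is in the orbit of z₀ and im w < im(−1/z₀)}. -/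
open UpperHalfPlane Matrix MatrixGroups Complex Filter Polynomial IntermediateField
open scoped Manifold Topology

noncomputable section

namespace SingMod

lemma key_cases (x y : ℝ) (c d : ℤ) (hx1 : -(1/2) ≤ x) (hx2 : x < 1/2)
    (hN : 1 ≤ x^2 + y^2)
    (hle : ((c:ℝ)*x + (d:ℝ))^2 + (c:ℝ)^2 * y^2 ≤ x^2 + y^2) :
    c = 0 ∨ (c = 1 ∧ d = 0) ∨ (c = -1 ∧ d = 0) ∨
      (x = -(1/2) ∧ c = 1 ∧ d = 1) ∨ (x = -(1/2) ∧ c = -1 ∧ d = -1) := by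
  have hx4 : x^2 ≤ (1/2)^2 := by nlinarith
  have hcb : -1 ≤ c ∧ c ≤ 1 := by
    by_contra h
    have h2 : 2 ≤ c ∨ c ≤ -2 := by omega
    have h4 : (4:ℝ) ≤ (c:ℝ)^2 := by
      rcases h2 with h2|h2
      · have : (2:ℝ) ≤ (c:ℝ) := by exact_mod_cast h2
        nlinarith
      · have : (c:ℝ) ≤ -2 := by exact_mod_cast h2
        nlinarith
    nlinarith [sq_nonneg ((c:ℝ)*x + (d:ℝ)), sq_nonneg y]
  obtain ⟨hc1, hc2⟩ := hcb
  interval_cases c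
  · -- c = -1
    push_cast at hle
    have hd : -1 ≤ d ∧ d ≤ 1 := by
      by_contra h
      have h2 : 2 ≤ d ∨ d ≤ -2 := by omega
      rcases h2 with h2|h2
      · have hdr : (2:ℝ) ≤ (d:ℝ) := by exact_mod_cast h2
        nlinarith [mul_pos (show (0:ℝ) < (d:ℝ) by linarith)
          (show (0:ℝ) < 1 - 2*x by linarith)]
      · have hdr : (d:ℝ) ≤ -2 := by exact_mod_cast h2
        nlinarith [mul_pos (show (0:ℝ) < -(d:ℝ) by linarith)
          (show (0:ℝ) < x + 1/2 + 1 by linarith),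
          mul_nonneg (show (0:ℝ) ≤ -(d:ℝ) by linarith) (show (0:ℝ) ≤ x + 1/2 by linarith)]
    obtain ⟨hd1, hd2⟩ := hd
    interval_cases d
    · right; right; right; right
      refine ⟨?_, rfl, rfl⟩
      push_cast at hle
      have : x ≤ -(1/2) := by nlinarith
      linarith
    · right; right; left; exact ⟨rfl, rfl⟩
    · exfalso
      push_cast at hle
      nlinarith
  · left; rfl
  · -- c = 1
    push_cast at hle
    have hd : -1 ≤ d ∧ d ≤ 1 := by
      by_contra h
      have h2 : 2 ≤ d ∨ d ≤ -2 := by omega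
      rcases h2 with h2|h2
      · have hdr : (2:ℝ) ≤ (d:ℝ) := by exact_mod_cast h2
        nlinarith [mul_nonneg (show (0:ℝ) ≤ (d:ℝ) by linarith)
          (show (0:ℝ) ≤ x + 1/2 by linarith)]
      · have hdr : (d:ℝ) ≤ -2 := by exact_mod_cast h2
        nlinarith [mul_pos (show (0:ℝ) < -(d:ℝ) by linarith)
          (show (0:ℝ) < 1 - 2*x by linarith)]
    obtain ⟨hd1, hd2⟩ := hd
    interval_cases d
    · exfalso
      push_cast at hle
      nlinarith
    · right; left; exact ⟨rfl, rfl⟩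
    · right; right; right; left
      refine ⟨?_, rfl, rfl⟩
      push_cast at hle
      have : x ≤ -(1/2) := by nlinarith
      linarith


lemma coe_smul_int (γ : SL(2, ℤ)) (z : UpperHalfPlane) :
    ((γ • z : UpperHalfPlane) : ℂ) =
      ((γ 0 0 : ℂ) * z + (γ 0 1 : ℂ)) / ((γ 1 0 : ℂ) * z + (γ 1 1 : ℂ)) := by
  rw [UpperHalfPlane.specialLinearGroup_apply, UpperHalfPlane.coe_mk]
  simp [algebraMap_int_eq]

lemma im_smul_int (γ : SL(2, ℤ)) (z : UpperHalfPlane) :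
    (γ • z).im = z.im / Complex.normSq ((γ 1 0 : ℂ) * z + (γ 1 1 : ℂ)) := by
  rw [ModularGroup.im_smul_eq_div_normSq, ModularGroup.denom_apply]

lemma coe_Ssmul (z : UpperHalfPlane) :
    ((ModularGroup.S • z : UpperHalfPlane) : ℂ) = -1 / (z : ℂ) := by
  rw [UpperHalfPlane.modular_S_smul, UpperHalfPlane.coe_mk, inv_neg, inv_eq_one_div, neg_div]

lemma mem_orbit_tr (z₀ : UpperHalfPlane) (k : ℤ) (w : UpperHalfPlane)
    (hw : (w : ℂ) = (z₀ : ℂ) + k) : w ∈ MulAction.orbit SL(2, ℤ) z₀ := by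
  have : w = ModularGroup.T ^ k • z₀ := by
    ext
    rw [UpperHalfPlane.modular_T_zpow_smul, UpperHalfPlane.coe_vadd, hw]
    push_cast; ring
  rw [this]; exact MulAction.mem_orbit _ _

lemma mem_orbit_S (z₀ : UpperHalfPlane) (k : ℤ) (w : UpperHalfPlane)
    (hw : (w : ℂ) = -1 / (z₀ : ℂ) + k) : w ∈ MulAction.orbit SL(2, ℤ) z₀ := by
  have : w = (ModularGroup.T ^ k * ModularGroup.S) • z₀ := by
    ext
    rw [mul_smul, UpperHalfPlane.modular_T_zpow_smul, UpperHalfPlane.coe_vadd,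
      coe_Ssmul, hw]
    push_cast; ring
  rw [this]; exact MulAction.mem_orbit _ _

lemma mem_orbit_ST (z₀ : UpperHalfPlane) (k : ℤ) (w : UpperHalfPlane)
    (hw : (w : ℂ) = -1 / ((z₀ : ℂ) + 1) + k) : w ∈ MulAction.orbit SL(2, ℤ) z₀ := by
  have : w = (ModularGroup.T ^ k * ModularGroup.S * ModularGroup.T) • z₀ := by
    ext
    rw [mul_smul, mul_smul, UpperHalfPlane.modular_T_zpow_smul,
      UpperHalfPlane.coe_vadd, coe_Ssmul, UpperHalfPlane.modular_T_smul,
      UpperHalfPlane.coe_vadd, hw]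
    push_cast; ring
  rw [this]; exact MulAction.mem_orbit _ _


/-- **Proposition.** Description of the `SL₂(ℤ)`-orbit of a point `z₀` of the fundamental
domain `𝔉_j`. -/
theorem orbit_description (z₀ : UpperHalfPlane) (hz₀ : z₀ ∈ Fdj) :
    (z₀.re ≠ -(1/2) →
      MulAction.orbit SL(2, ℤ) z₀ =
        {w : UpperHalfPlane | ∃ k : ℤ, (w : ℂ) = (z₀ : ℂ) + k} ∪
        {w : UpperHalfPlane | ∃ k : ℤ, (w : ℂ) = -1 / (z₀ : ℂ) + k} ∪
        {w : UpperHalfPlane | w ∈ MulAction.orbit SL(2, ℤ) z₀ ∧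
          w.im < (-1 / (z₀ : ℂ)).im}) ∧
    (z₀.re = -(1/2) →
      MulAction.orbit SL(2, ℤ) z₀ =
        {w : UpperHalfPlane | ∃ k : ℤ, (w : ℂ) = (z₀ : ℂ) + k} ∪
        {w : UpperHalfPlane | ∃ k : ℤ, (w : ℂ) = -1 / (z₀ : ℂ) + k} ∪
        {w : UpperHalfPlane | ∃ k : ℤ, (w : ℂ) = -1 / ((z₀ : ℂ) + 1) + k} ∪
        {w : UpperHalfPlane | w ∈ MulAction.orbit SL(2, ℤ) z₀ ∧
          w.im < (-1 / (z₀ : ℂ)).im}) := by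
  obtain ⟨hx1, hx2, habs, -⟩ := hz₀
  have hy : 0 < z₀.im := z₀.im_pos
  have hz1ne : (z₀ : ℂ) + 1 ≠ 0 := by
    intro h
    have := congrArg Complex.im h
    simp only [Complex.add_im, Complex.one_im, Complex.zero_im, add_zero,
      UpperHalfPlane.coe_im] at this
    exact z₀.im_ne_zero this
  have hN : 1 ≤ z₀.re^2 + z₀.im^2 := by
    have h1 : Complex.normSq (z₀ : ℂ) = z₀.re^2 + z₀.im^2 := by
      rw [Complex.normSq_apply, UpperHalfPlane.coe_re, UpperHalfPlane.coe_im]; ring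
    have h2 := Complex.sq_norm (z₀ : ℂ)
    nlinarith
  have him : (-1/(z₀:ℂ)).im = z₀.im / (z₀.re^2 + z₀.im^2) := by
    rw [neg_div, Complex.neg_im, one_div, Complex.inv_im, UpperHalfPlane.coe_im,
      Complex.normSq_apply, UpperHalfPlane.coe_re, UpperHalfPlane.coe_im, neg_div, neg_neg]
    ring_nf
  have main : ∀ γ : SL(2, ℤ),
      (∃ k : ℤ, ((γ • z₀ : UpperHalfPlane) : ℂ) = (z₀:ℂ) + k) ∨
      (∃ k : ℤ, ((γ • z₀ : UpperHalfPlane) : ℂ) = -1/(z₀:ℂ) + k) ∨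
      (z₀.re = -(1/2) ∧ ∃ k : ℤ, ((γ • z₀ : UpperHalfPlane) : ℂ) = -1/((z₀:ℂ)+1) + k) ∨
      (γ • z₀).im < (-1/(z₀:ℂ)).im := by
    intro γ
    by_cases hlt : (γ • z₀).im < (-1/(z₀:ℂ)).im
    · exact Or.inr (Or.inr (Or.inr hlt))
    have hge := le_of_not_gt hlt
    rw [im_smul_int, him] at hge
    have hnspos : 0 < Complex.normSq ((γ 1 0 : ℂ) * z₀ + (γ 1 1 : ℂ)) := by
      have := UpperHalfPlane.normSq_denom_pos γ (z := z₀) z₀.im_ne_zero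
      rwa [ModularGroup.denom_apply] at this
    have hns : Complex.normSq ((γ 1 0 : ℂ) * z₀ + (γ 1 1 : ℂ)) =
        ((γ 1 0 : ℝ) * z₀.re + (γ 1 1 : ℝ))^2 + (γ 1 0 : ℝ)^2 * z₀.im^2 := by
      rw [Complex.normSq_apply]
      simp only [Complex.add_re, Complex.add_im, Complex.mul_re, Complex.mul_im,
        Complex.intCast_re, Complex.intCast_im, UpperHalfPlane.coe_re, UpperHalfPlane.coe_im]
      ring
    have hle : ((γ 1 0 : ℝ) * z₀.re + (γ 1 1 : ℝ))^2 + (γ 1 0 : ℝ)^2 * z₀.im^2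
        ≤ z₀.re^2 + z₀.im^2 := by
      rw [hns] at hnspos hge
      rw [div_le_div_iff₀ (by linarith) hnspos] at hge
      nlinarith
    have hdet : γ 0 0 * γ 1 1 - γ 0 1 * γ 1 0 = 1 := by
      have h := γ.2
      rw [Matrix.det_fin_two] at h
      exact h
    have hcoe := coe_smul_int γ z₀
    rcases key_cases z₀.re z₀.im (γ 1 0) (γ 1 1) hx1 hx2 hN hle with
      hc | ⟨hc, hd⟩ | ⟨hc, hd⟩ | ⟨hx, hc, hd⟩ | ⟨hx, hc, hd⟩
    · rw [hc] at hdet hcoe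
      simp only [mul_zero, sub_zero] at hdet
      rcases Int.eq_one_or_neg_one_of_mul_eq_one' hdet with ⟨ha, hd⟩ | ⟨ha, hd⟩
      · refine Or.inl ⟨γ 0 1, ?_⟩
        rw [hcoe, ha, hd]; push_cast; simp
      · refine Or.inl ⟨-γ 0 1, ?_⟩
        rw [hcoe, ha, hd]; push_cast
        field_simp
        ring
    · rw [hc, hd] at hdet hcoe
      have hb : γ 0 1 = -1 := by
        simp only [mul_zero, mul_one, zero_sub, neg_eq_iff_eq_neg] at hdet; omega
      refine Or.inr (Or.inl ⟨γ 0 0, ?_⟩)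
      rw [hcoe, hb]; push_cast
      field_simp [z₀.ne_zero]
      ring
    · rw [hc, hd] at hdet hcoe
      have hb : γ 0 1 = 1 := by
        simp only [mul_zero, mul_neg_one, zero_sub, sub_neg_eq_add, zero_add] at hdet; omega
      refine Or.inr (Or.inl ⟨-γ 0 0, ?_⟩)
      rw [hcoe, hb]; push_cast
      field_simp [z₀.ne_zero]
      ring
    · rw [hc, hd] at hdet hcoe
      have hb : γ 0 1 = γ 0 0 - 1 := by
        simp only [mul_one] at hdet; omega
      refine Or.inr (Or.inr (Or.inl ⟨hx, γ 0 0, ?_⟩))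
      rw [hcoe, hb]; push_cast
      field_simp [hz1ne]
      ring
    · rw [hc, hd] at hdet hcoe
      have hb : γ 0 1 = γ 0 0 + 1 := by
        simp only [mul_neg_one, mul_one, sub_neg_eq_add] at hdet; omega
      have hne2 : (-1 : ℂ) * (z₀ : ℂ) + -1 ≠ 0 := by
        intro h; apply hz1ne; linear_combination -h
      have hne3 : (-1 : ℂ) - (z₀ : ℂ) ≠ 0 := by
        intro h; apply hz1ne; linear_combination -h
      refine Or.inr (Or.inr (Or.inl ⟨hx, -γ 0 0, ?_⟩))
      rw [hcoe, hb]; push_cast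
      rw [div_eq_iff hne2]
      field_simp [hz1ne]
      ring
  constructor
  · intro hre
    ext w
    simp only [Set.mem_union, Set.mem_setOf_eq]
    constructor
    · rintro ⟨γ, rfl⟩
      rcases main γ with ⟨k, hk⟩ | ⟨k, hk⟩ | ⟨hx, -⟩ | hlt
      · exact Or.inl (Or.inl ⟨k, hk⟩)
      · exact Or.inl (Or.inr ⟨k, hk⟩)
      · exact absurd hx hre
      · exact Or.inr ⟨MulAction.mem_orbit _ _, hlt⟩
    · rintro ((⟨k, hk⟩ | ⟨k, hk⟩) | ⟨hw, -⟩)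
      · exact mem_orbit_tr z₀ k w hk
      · exact mem_orbit_S z₀ k w hk
      · exact hw
  · intro _
    ext w
    simp only [Set.mem_union, Set.mem_setOf_eq]
    constructor
    · rintro ⟨γ, rfl⟩
      rcases main γ with ⟨k, hk⟩ | ⟨k, hk⟩ | ⟨-, k, hk⟩ | hlt
      · exact Or.inl (Or.inl (Or.inl ⟨k, hk⟩))
      · exact Or.inl (Or.inl (Or.inr ⟨k, hk⟩))
      · exact Or.inl (Or.inr ⟨k, hk⟩)
      · exact Or.inr ⟨MulAction.mem_orbit _ _, hlt⟩
    · rintro (((⟨k, hk⟩ | ⟨k, hk⟩) | ⟨k, hk⟩) | ⟨hw, -⟩)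
      · exact mem_orbit_tr z₀ k w hk
      · exact mem_orbit_S z₀ k w hk
      · exact mem_orbit_ST z₀ k w hk
      · exact hw


end SingMod
end
end

section
/- Let g ∈ GL₂⁺(ℚ). Then there exist a unique N ∈ ℤ_{>0} and a unique g' ∈ C(N) such that j(gz) = j(g'z) for all z ∈ ℍ. -/
open UpperHalfPlane Matrix MatrixGroups Complex Filter Polynomial IntermediateField
open scoped Manifold Topology

noncomputable section

namespace SingMod

set_option synthInstance.maxHeartbeats 1000000
set_option maxHeartbeats 1000000
lemma coe_qSMul (g : Matrix (Fin 2) (Fin 2) ℚ) (hg : 0 < g.det) (z : UpperHalfPlane) :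
    (qSMul g hg z : ℂ) = ((g 0 0 : ℂ) * z + (g 0 1 : ℂ)) / ((g 1 0 : ℂ) * z + (g 1 1 : ℂ)) := by
  show (((toGLPos g hg) • z : UpperHalfPlane) : ℂ) = _
  rw [Subgroup.smul_def, UpperHalfPlane.coe_smul_of_det_pos ((Matrix.mem_glpos _).1 (toGLPos g hg).2)]
  rfl

lemma denom_qSMul_ne_zero (g : Matrix (Fin 2) (Fin 2) ℚ) (hg : 0 < g.det) (z : UpperHalfPlane) :
    ((g 1 0 : ℂ) * z + (g 1 1 : ℂ)) ≠ 0 :=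
  UpperHalfPlane.denom_ne_zero (toGLPos g hg) z

lemma toGLPos_mul (g h : Matrix (Fin 2) (Fin 2) ℚ) (hg : 0 < g.det) (hh : 0 < h.det)
    (hgh : 0 < (g * h).det) : toGLPos (g * h) hgh = toGLPos g hg * toGLPos h hh := by
  apply Subtype.ext
  apply Units.ext
  show (g * h).map _ = g.map _ * h.map _
  exact Matrix.map_mul (f := Rat.castHom ℝ)

lemma qSMul_mul (g h : Matrix (Fin 2) (Fin 2) ℚ) (hg : 0 < g.det) (hh : 0 < h.det)
    (hgh : 0 < (g * h).det) (z : UpperHalfPlane) :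
    qSMul (g * h) hgh z = qSMul g hg (qSMul h hh z) := by
  show toGLPos (g * h) hgh • z = toGLPos g hg • (toGLPos h hh • z)
  rw [toGLPos_mul g h hg hh hgh, mul_smul]

lemma qSMul_rat_smul (q : ℚ) (hq : 0 < q) (g : Matrix (Fin 2) (Fin 2) ℚ) (hg : 0 < g.det)
    (h2 : 0 < (q • g).det) (z : UpperHalfPlane) : qSMul (q • g) h2 z = qSMul g hg z := by
  ext1
  rw [coe_qSMul, coe_qSMul]
  have h3 := denom_qSMul_ne_zero g hg z
  have h4 := denom_qSMul_ne_zero (q • g) h2 z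
  simp only [Matrix.smul_apply, smul_eq_mul, Rat.cast_mul] at h4 ⊢
  field_simp

lemma det_map_intCast (M : Matrix (Fin 2) (Fin 2) ℤ) :
    (M.map ((↑) : ℤ → ℚ)).det = (M.det : ℚ) := by
  rw [show ((↑) : ℤ → ℚ) = ⇑(Int.castRingHom ℚ) from rfl, ← RingHom.mapMatrix_apply,
    ← RingHom.map_det]

lemma act_eq_qSMul (M : Matrix (Fin 2) (Fin 2) ℤ) (hM : 0 < M.det)
    (h2 : 0 < (M.map ((↑) : ℤ → ℚ)).det) (z : UpperHalfPlane) :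
    act M z = qSMul (M.map ((↑) : ℤ → ℚ)) h2 z := by
  rw [act, dif_pos hM]
  rfl

lemma qSMul_sl (γ : SL(2, ℤ)) (h2 : 0 < ((γ : Matrix (Fin 2) (Fin 2) ℤ).map ((↑) : ℤ → ℚ)).det)
    (z : UpperHalfPlane) :
    qSMul ((γ : Matrix (Fin 2) (Fin 2) ℤ).map ((↑) : ℤ → ℚ)) h2 z = γ • z := by
  ext1
  rw [coe_qSMul, UpperHalfPlane.specialLinearGroup_apply]
  simp only [Matrix.map_apply, eq_intCast, UpperHalfPlane.coe_mk]
  norm_cast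

lemma gcd3_shear (a b d k : ℤ) :
    Int.gcd (Int.gcd a (d * k + b)) d = Int.gcd (Int.gcd a b) d := by
  apply Nat.dvd_antisymm
  · apply Int.natCast_dvd_natCast.1
    have h1 : (Int.gcd (Int.gcd a (d * k + b)) d : ℤ) ∣ a :=
      dvd_trans (Int.gcd_dvd_left _ _) (Int.gcd_dvd_left _ _)
    have h2 : (Int.gcd (Int.gcd a (d * k + b)) d : ℤ) ∣ d * k + b :=
      dvd_trans (Int.gcd_dvd_left _ _) (Int.gcd_dvd_right _ _)
    have h3 : (Int.gcd (Int.gcd a (d * k + b)) d : ℤ) ∣ d := Int.gcd_dvd_right _ _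
    have h4 : (Int.gcd (Int.gcd a (d * k + b)) d : ℤ) ∣ b := by
      have := dvd_sub h2 (h3.mul_right k)
      simpa using this
    exact Int.dvd_coe_gcd (Int.dvd_coe_gcd h1 h4) h3
  · apply Int.natCast_dvd_natCast.1
    have h1 : (Int.gcd (Int.gcd a b) d : ℤ) ∣ a :=
      dvd_trans (Int.gcd_dvd_left _ _) (Int.gcd_dvd_left _ _)
    have h4 : (Int.gcd (Int.gcd a b) d : ℤ) ∣ b :=
      dvd_trans (Int.gcd_dvd_left _ _) (Int.gcd_dvd_right _ _)
    have h3 : (Int.gcd (Int.gcd a b) d : ℤ) ∣ d := Int.gcd_dvd_right _ _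
    exact Int.dvd_coe_gcd (Int.dvd_coe_gcd h1 (dvd_add (h3.mul_right k) h4)) h3

lemma hermite (M : Matrix (Fin 2) (Fin 2) ℤ) (hM : 0 < M.det) :
    ∃ (γ : SL(2, ℤ)) (c : ℤ) (T : Matrix (Fin 2) (Fin 2) ℤ), 0 < c ∧
      M = c • ((γ : Matrix (Fin 2) (Fin 2) ℤ) * T) ∧ 0 < T.det ∧ T ∈ Cset T.det := by
  have hdet : M.det = M 0 0 * M 1 1 - M 0 1 * M 1 0 := Matrix.det_fin_two M
  set p := M 0 0 with hp'
  set q := M 0 1 with hq'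
  set r := M 1 0 with hr'
  set s := M 1 1 with hs'
  have hpr : p ≠ 0 ∨ r ≠ 0 := by
    by_contra h
    push_neg at h
    rw [hdet, h.1, h.2] at hM
    simp at hM
  set a₀ : ℤ := (Int.gcd p r : ℤ) with ha₀def
  have ha₀ : 0 < a₀ := by
    rw [ha₀def]
    exact_mod_cast Int.gcd_pos_iff.2 hpr
  have ha₀' : a₀ ≠ 0 := ha₀.ne'
  set u := Int.gcdA p r with hu'
  set v := Int.gcdB p r with hv'
  have hbez : a₀ = p * u + r * v := Int.gcd_eq_gcd_ab p r
  obtain ⟨p1, hp1⟩ : a₀ ∣ p := Int.gcd_dvd_left _ _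
  obtain ⟨r1, hr1⟩ : a₀ ∣ r := Int.gcd_dvd_right _ _
  have key : p1 * u + r1 * v = 1 := by
    apply mul_left_cancel₀ ha₀'
    rw [mul_one]
    linear_combination -hbez - u * hp1 - v * hr1
  have hdet1 : (!![u, v; -r1, p1] : Matrix (Fin 2) (Fin 2) ℤ).det = 1 := by
    rw [Matrix.det_fin_two_of]
    linear_combination key
  have hdet2 : (!![p1, -v; r1, u] : Matrix (Fin 2) (Fin 2) ℤ).det = 1 := by
    rw [Matrix.det_fin_two_of]
    linear_combination key
  set γ₁ : SL(2, ℤ) := ⟨!![u, v; -r1, p1], hdet1⟩ with hγ₁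
  set δ : SL(2, ℤ) := ⟨!![p1, -v; r1, u], hdet2⟩ with hδ
  set b₀ : ℤ := u * q + v * s with hb₀'
  set d : ℤ := -(r1 * q) + p1 * s with hd'
  set B : Matrix (Fin 2) (Fin 2) ℤ := !![a₀, b₀; 0, d] with hB'
  have hδγ : (δ : Matrix (Fin 2) (Fin 2) ℤ) * (γ₁ : Matrix (Fin 2) (Fin 2) ℤ) = 1 := by
    show (!![p1, -v; r1, u] : Matrix (Fin 2) (Fin 2) ℤ) * !![u, v; -r1, p1] = 1
    ext i j
    fin_cases i <;> fin_cases j <;>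
      simp [Matrix.mul_apply, Fin.sum_univ_two, Matrix.one_apply]
    all_goals first
      | ring1
      | linear_combination key
      | linear_combination -key
  have hA : (γ₁ : Matrix (Fin 2) (Fin 2) ℤ) * M = B := by
    show (!![u, v; -r1, p1] : Matrix (Fin 2) (Fin 2) ℤ) * M = B
    ext i j
    fin_cases i <;> fin_cases j <;>
      simp [Matrix.mul_apply, Fin.sum_univ_two, hB'] <;>
      simp only [← hp', ← hq', ← hr', ← hs']
    · linear_combination -hbez
    · rfl
    · linear_combination -r1 * hp1 + p1 * hr1
    · rfl
  have hMA : M = (δ : Matrix (Fin 2) (Fin 2) ℤ) * B := by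
    rw [← hA, ← Matrix.mul_assoc, hδγ, Matrix.one_mul]
  have hdetB : a₀ * d = M.det := by
    have h2 : B.det = ((γ₁ : Matrix (Fin 2) (Fin 2) ℤ) * M).det := by rw [hA]
    rw [Matrix.det_mul, γ₁.2, one_mul, hB', Matrix.det_fin_two_of] at h2
    linarith [h2]
  have hd : 0 < d := by nlinarith
  set c : ℤ := (Int.gcd (Int.gcd a₀ b₀) d : ℤ) with hc'
  have hc : 0 < c := by
    have h0 : Int.gcd a₀ b₀ ≠ 0 := by
      intro h
      exact ha₀' (Int.gcd_eq_zero_iff.1 h).1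
    rw [hc']
    exact_mod_cast Int.gcd_pos_of_ne_zero_left d (by exact_mod_cast h0)
  have hca : c ∣ a₀ := dvd_trans (Int.gcd_dvd_left _ _) (Int.gcd_dvd_left _ _)
  have hcb : c ∣ b₀ := dvd_trans (Int.gcd_dvd_left _ _) (Int.gcd_dvd_right _ _)
  have hcd : c ∣ d := Int.gcd_dvd_right _ _
  set a' := a₀ / c with ha''
  set b' := b₀ / c with hb''
  set d' := d / c with hd''
  have hca' : c * a' = a₀ := Int.mul_ediv_cancel' hca
  have hcb' : c * b' = b₀ := Int.mul_ediv_cancel' hcb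
  have hcd' : c * d' = d := Int.mul_ediv_cancel' hcd
  have ha'pos : 0 < a' := by nlinarith
  have hd'pos : 0 < d' := by nlinarith
  have hg1 : Int.gcd (Int.gcd a' b') d' = 1 := by
    set e := Int.gcd (Int.gcd a' b') d' with he'
    have h1 : (e : ℤ) ∣ a' := dvd_trans (Int.gcd_dvd_left _ _) (Int.gcd_dvd_left _ _)
    have h2 : (e : ℤ) ∣ b' := dvd_trans (Int.gcd_dvd_left _ _) (Int.gcd_dvd_right _ _)
    have h3 : (e : ℤ) ∣ d' := Int.gcd_dvd_right _ _
    have k1 : c * (e : ℤ) ∣ a₀ := hca' ▸ mul_dvd_mul_left c h1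
    have k2 : c * (e : ℤ) ∣ b₀ := hcb' ▸ mul_dvd_mul_left c h2
    have k3 : c * (e : ℤ) ∣ d := hcd' ▸ mul_dvd_mul_left c h3
    have k4 : c * (e : ℤ) ∣ c := Int.dvd_coe_gcd (Int.dvd_coe_gcd k1 k2) k3
    have k5 : (e : ℤ) ∣ 1 := by
      refine (mul_dvd_mul_iff_left hc.ne').1 ?_
      rwa [mul_one]
    have : (e : ℤ) = 1 := Int.eq_one_of_dvd_one (by positivity) k5
    exact_mod_cast this
  set k := b' / d' with hk'
  set b'' := b' % d' with hbb'
  have hbsplit : b' = d' * k + b'' := (Int.mul_ediv_add_emod b' d').symm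
  have hb''0 : 0 ≤ b'' := Int.emod_nonneg b' hd'pos.ne'
  have hb''lt : b'' < d' := Int.emod_lt_of_pos b' hd'pos
  set T : Matrix (Fin 2) (Fin 2) ℤ := !![a', b''; 0, d'] with hT'
  have hT00 : T 0 0 = a' := by rw [hT']; simp
  have hT01 : T 0 1 = b'' := by rw [hT']; simp
  have hT10 : T 1 0 = 0 := by rw [hT']; simp
  have hT11 : T 1 1 = d' := by rw [hT']; simp
  have hdetT : T.det = a' * d' := by rw [hT', Matrix.det_fin_two_of]; ring
  set γ₂ : SL(2, ℤ) := ⟨!![1, k; 0, 1], by rw [Matrix.det_fin_two_of]; ring⟩ with hγ₂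
  have hBT : B = c • ((γ₂ : Matrix (Fin 2) (Fin 2) ℤ) * T) := by
    show B = c • ((!![1, k; 0, 1] : Matrix (Fin 2) (Fin 2) ℤ) * !![a', b''; 0, d'])
    rw [hB']
    ext i j
    fin_cases i <;> fin_cases j <;>
      simp [Matrix.mul_apply, Fin.sum_univ_two, Matrix.smul_apply, smul_eq_mul]
    · linear_combination -hca'
    · linear_combination -hcb' + c * hbsplit
    · linear_combination -hcd'
  refine ⟨δ * γ₂, c, T, hc, ?_, ?_, ?_⟩
  · rw [hMA, hBT, Matrix.mul_smul, ← Matrix.mul_assoc]; rfl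
  · rw [hdetT]; exact mul_pos ha'pos hd'pos
  · refine ⟨hT10, ?_, ?_, ?_, ?_, ?_⟩
    · rw [hT00, hT11, hdetT]
    · rw [hT00]; exact ha'pos
    · rw [hT01]; exact hb''0
    · rw [hT01, hT11]; exact hb''lt
    · rw [hT00, hT01, hT11, ← hg1, hbsplit, gcd3_shear]

lemma exists_int_mul (q : ℚ) (n : ℤ) (h : (q.den : ℤ) ∣ n) : ∃ z : ℤ, (z : ℚ) = (n : ℚ) * q := by
  obtain ⟨t, ht⟩ := h
  refine ⟨t * q.num, ?_⟩
  have hd : (q.den : ℚ) ≠ 0 := by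
    exact_mod_cast q.den_nz
  have hq : (q.num : ℚ) = q * (q.den : ℚ) := (div_eq_iff hd).1 (Rat.num_div_den q)
  rw [ht]
  push_cast [hq]
  ring

lemma exists_int_matrix (g : Matrix (Fin 2) (Fin 2) ℚ) :
    ∃ (m : ℤ) (M : Matrix (Fin 2) (Fin 2) ℤ), 0 < m ∧
      M.map ((↑) : ℤ → ℚ) = (m : ℚ) • g := by
  set m : ℤ := (((g 0 0).den * (g 0 1).den * (g 1 0).den * (g 1 1).den : ℕ) : ℤ) with hm
  have hmpos : 0 < m := by
    rw [hm]
    exact_mod_cast mul_pos (mul_pos (mul_pos (g 0 0).pos (g 0 1).pos) (g 1 0).pos) (g 1 1).pos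
  have hdvd : ∀ i j : Fin 2, ((g i j).den : ℤ) ∣ m := by
    intro i j
    rw [hm]
    fin_cases i <;> fin_cases j <;>
      · apply Int.natCast_dvd_natCast.2
        first
        | exact ((dvd_mul_right _ _).mul_right _).mul_right _
        | exact ((dvd_mul_left _ _).mul_right _).mul_right _
        | exact (dvd_mul_left _ _).mul_right _
        | exact dvd_mul_left _ _
  choose z hz using fun i j => exists_int_mul (g i j) m (hdvd i j)
  refine ⟨m, Matrix.of z, hmpos, ?_⟩
  ext i j
  simp only [Matrix.map_apply, Matrix.of_apply, Matrix.smul_apply, smul_eq_mul]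
  exact hz i j

lemma qSMul_congr (g₁ g₂ : Matrix (Fin 2) (Fin 2) ℚ) (h₁ : 0 < g₁.det) (h₂ : 0 < g₂.det)
    (e : g₁ = g₂) (z : UpperHalfPlane) : qSMul g₁ h₁ z = qSMul g₂ h₂ z := by
  subst e; rfl

lemma map_smul_int (c : ℤ) (X : Matrix (Fin 2) (Fin 2) ℤ) :
    (c • X).map ((↑) : ℤ → ℚ) = (c : ℚ) • (X.map ((↑) : ℤ → ℚ)) := by
  ext i j
  simp only [Matrix.map_apply, Matrix.smul_apply, smul_eq_mul]
  push_cast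
  ring

lemma map_mul_int (X Y : Matrix (Fin 2) (Fin 2) ℤ) :
    (X * Y).map ((↑) : ℤ → ℚ) = X.map ((↑) : ℤ → ℚ) * Y.map ((↑) : ℤ → ℚ) := by
  rw [show ((↑) : ℤ → ℚ) = ⇑(Int.castRingHom ℚ) from rfl]
  exact Matrix.map_mul

lemma exists_rep (g : Matrix (Fin 2) (Fin 2) ℚ) (hg : 0 < g.det) :
    ∃ (γ : SL(2, ℤ)) (T : Matrix (Fin 2) (Fin 2) ℤ), 0 < T.det ∧ T ∈ Cset T.det ∧
      ∀ z, qSMul g hg z = γ • act T z := by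
  obtain ⟨m, M₀, hm, hmap⟩ := exists_int_matrix g
  have hdM₀ : 0 < M₀.det := by
    have h1 : ((M₀.det : ℚ)) = (m : ℚ) ^ 2 * g.det := by
      rw [← det_map_intCast, hmap, Matrix.det_smul]
      norm_num
    have h2 : (0 : ℚ) < (M₀.det : ℚ) := by
      rw [h1]
      have : (0 : ℚ) < (m : ℚ) := by exact_mod_cast hm
      positivity
    exact_mod_cast h2
  obtain ⟨γ, c, T, hc, hfact, hdT, hTC⟩ := hermite M₀ hdM₀
  have hdTq : 0 < (T.map ((↑) : ℤ → ℚ)).det := by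
    rw [det_map_intCast]; exact_mod_cast hdT
  have hdγ : 0 < ((γ : Matrix (Fin 2) (Fin 2) ℤ).map ((↑) : ℤ → ℚ)).det := by
    rw [det_map_intCast, γ.2]; norm_num
  have hdprod : 0 < ((γ : Matrix (Fin 2) (Fin 2) ℤ).map ((↑) : ℤ → ℚ) *
      T.map ((↑) : ℤ → ℚ)).det := by
    rw [Matrix.det_mul]; exact mul_pos hdγ hdTq
  have hdsm : 0 < ((m : ℚ) • g).det := by
    rw [Matrix.det_smul]
    have : (0 : ℚ) < (m : ℚ) := by exact_mod_cast hm
    norm_num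
    positivity
  have hdM₀q : 0 < (M₀.map ((↑) : ℤ → ℚ)).det := by
    rw [det_map_intCast]; exact_mod_cast hdM₀
  have hdcs : 0 < ((c : ℚ) • ((γ : Matrix (Fin 2) (Fin 2) ℤ).map ((↑) : ℤ → ℚ) *
      T.map ((↑) : ℤ → ℚ))).det := by
    rw [Matrix.det_smul]
    have : (0 : ℚ) < (c : ℚ) := by exact_mod_cast hc
    norm_num
    positivity
  refine ⟨γ, T, hdT, hTC, fun z => ?_⟩
  have s1 : qSMul g hg z = qSMul ((m : ℚ) • g) hdsm z :=
    (qSMul_rat_smul (m : ℚ) (by exact_mod_cast hm) g hg hdsm z).symm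
  have s2 : qSMul ((m : ℚ) • g) hdsm z = qSMul (M₀.map ((↑) : ℤ → ℚ)) hdM₀q z :=
    qSMul_congr _ _ _ _ hmap.symm z
  have s3 : qSMul (M₀.map ((↑) : ℤ → ℚ)) hdM₀q z =
      qSMul ((c : ℚ) • ((γ : Matrix (Fin 2) (Fin 2) ℤ).map ((↑) : ℤ → ℚ) *
        T.map ((↑) : ℤ → ℚ))) hdcs z := by
    apply qSMul_congr
    rw [hfact, map_smul_int, map_mul_int]
  have s4 : qSMul ((c : ℚ) • ((γ : Matrix (Fin 2) (Fin 2) ℤ).map ((↑) : ℤ → ℚ) *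
      T.map ((↑) : ℤ → ℚ))) hdcs z =
      qSMul ((γ : Matrix (Fin 2) (Fin 2) ℤ).map ((↑) : ℤ → ℚ) *
        T.map ((↑) : ℤ → ℚ)) hdprod z :=
    qSMul_rat_smul (c : ℚ) (by exact_mod_cast hc) _ hdprod hdcs z
  have s5 : qSMul ((γ : Matrix (Fin 2) (Fin 2) ℤ).map ((↑) : ℤ → ℚ) *
      T.map ((↑) : ℤ → ℚ)) hdprod z =
      qSMul ((γ : Matrix (Fin 2) (Fin 2) ℤ).map ((↑) : ℤ → ℚ)) hdγ
        (qSMul (T.map ((↑) : ℤ → ℚ)) hdTq z) :=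
    qSMul_mul _ _ hdγ hdTq hdprod z
  have s6 : qSMul ((γ : Matrix (Fin 2) (Fin 2) ℤ).map ((↑) : ℤ → ℚ)) hdγ
      (qSMul (T.map ((↑) : ℤ → ℚ)) hdTq z) = γ • (qSMul (T.map ((↑) : ℤ → ℚ)) hdTq z) :=
    qSMul_sl γ hdγ _
  rw [s1, s2, s3, s4, s5, s6, act_eq_qSMul T hdT hdTq z]

/-- The point `i·max(y,1)` of the upper half plane. -/
def ptt (y : ℝ) : UpperHalfPlane :=
  ⟨Complex.I * ((max y 1 : ℝ) : ℂ), by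
    simp [Complex.mul_im]⟩

lemma ptt_coe (y : ℝ) : (ptt y : ℂ) = Complex.I * ((max y 1 : ℝ) : ℂ) := rfl

lemma ptt_im (y : ℝ) : (ptt y).im = max y 1 := by
  have : (ptt y).im = ((ptt y : ℂ)).im := (UpperHalfPlane.coe_im _).symm
  rw [this, ptt_coe]
  simp [Complex.mul_im]

lemma act_coe (T : Matrix (Fin 2) (Fin 2) ℤ) (hdT : 0 < T.det) (h10 : T 1 0 = 0)
    (z : UpperHalfPlane) :
    (act T z : ℂ) = ((T 0 0 : ℂ) * z + (T 0 1 : ℂ)) / (T 1 1 : ℂ) := by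
  have h2 : 0 < (T.map ((↑) : ℤ → ℚ)).det := by
    rw [det_map_intCast]; exact_mod_cast hdT
  rw [act_eq_qSMul T hdT h2, coe_qSMul]
  simp only [Matrix.map_apply, h10]
  push_cast
  ring_nf

lemma act_im (T : Matrix (Fin 2) (Fin 2) ℤ) (hdT : 0 < T.det) (h10 : T 1 0 = 0)
    (z : UpperHalfPlane) :
    (act T z).im = (T 0 0 : ℝ) / (T 1 1 : ℝ) * z.im := by
  have h1 : (act T z).im = ((act T z : ℂ)).im := (UpperHalfPlane.coe_im _).symm
  rw [h1, act_coe T hdT h10 z]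
  have h2 : ((T 1 1 : ℤ) : ℂ) = (((T 1 1 : ℤ) : ℝ) : ℂ) := by push_cast; ring
  rw [h2, Complex.div_ofReal_im]
  have h3 : ((T 0 0 : ℂ) * (z : ℂ) + (T 0 1 : ℂ)).im = (T 0 0 : ℝ) * z.im := by
    simp [Complex.add_im, Complex.mul_im, UpperHalfPlane.coe_im]
  rw [h3]
  ring

lemma tendsto_act_ptt (T : Matrix (Fin 2) (Fin 2) ℤ) (hdT : 0 < T.det) (h10 : T 1 0 = 0)
    (hapos : 0 < T 0 0) (hdpos : 0 < T 1 1) :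
    Filter.Tendsto (fun y : ℝ => act T (ptt y)) Filter.atTop UpperHalfPlane.atImInfty := by
  rw [UpperHalfPlane.atImInfty, Filter.tendsto_comap_iff]
  have h1 : (UpperHalfPlane.im ∘ fun y : ℝ => act T (ptt y)) =
      fun y : ℝ => (T 0 0 : ℝ) / (T 1 1 : ℝ) * max y 1 := by
    funext y
    rw [Function.comp_apply, act_im T hdT h10, ptt_im]
  rw [h1]
  apply Filter.Tendsto.const_mul_atTop
  · have h00 : (0 : ℝ) < (T 0 0 : ℝ) := by exact_mod_cast hapos
    have h11 : (0 : ℝ) < (T 1 1 : ℝ) := by exact_mod_cast hdpos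
    positivity
  · exact tendsto_atTop_mono (fun y => le_max_left y 1) tendsto_id

lemma rep_unique (j : UpperHalfPlane → ℂ) (hj : IsJFunction j)
    (N N' : ℤ) (T T' : Matrix (Fin 2) (Fin 2) ℤ) (hN : 0 < N) (hN' : 0 < N')
    (hT : T ∈ Cset N) (hT' : T' ∈ Cset N')
    (h : ∀ z, j (act T z) = j (act T' z)) : N = N' ∧ T = T' := by
  obtain ⟨h10, hprod, ha, hb0, hbd, hgcd⟩ := hT
  obtain ⟨h10', hprod', ha', hb0', hbd', hgcd'⟩ := hT'
  have hd : 0 < T 1 1 := lt_of_le_of_lt hb0 hbd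
  have hd' : 0 < T' 1 1 := lt_of_le_of_lt hb0' hbd'
  have hdT : 0 < T.det := by
    rw [Matrix.det_fin_two, h10, mul_zero, sub_zero, hprod]; exact hN
  have hdT' : 0 < T'.det := by
    rw [Matrix.det_fin_two, h10', mul_zero, sub_zero, hprod']; exact hN'
  have hdcne : ((T 1 1 : ℤ) : ℂ) ≠ 0 := by exact_mod_cast hd.ne'
  have hdcne' : ((T' 1 1 : ℤ) : ℂ) ≠ 0 := by exact_mod_cast hd'.ne'
  have hdrne : ((T 1 1 : ℤ) : ℝ) ≠ 0 := by exact_mod_cast hd.ne'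
  have hdrne' : ((T' 1 1 : ℤ) : ℝ) ≠ 0 := by exact_mod_cast hd'.ne'
  set α : ℝ := (T 0 0 : ℝ) / (T 1 1 : ℝ) - (T' 0 0 : ℝ) / (T' 1 1 : ℝ) with hαdef
  set β : ℝ := (T 0 1 : ℝ) / (T 1 1 : ℝ) - (T' 0 1 : ℝ) / (T' 1 1 : ℝ) with hβdef
  have hαc : ((α : ℝ) : ℂ) = (T 0 0 : ℂ) / (T 1 1 : ℂ) - (T' 0 0 : ℂ) / (T' 1 1 : ℂ) := by
    rw [hαdef]; push_cast; ring
  have hβc : ((β : ℝ) : ℂ) = (T 0 1 : ℂ) / (T 1 1 : ℂ) - (T' 0 1 : ℂ) / (T' 1 1 : ℂ) := by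
    rw [hβdef]; push_cast; ring
  have hwdiff : ∀ y : ℝ, (act T (ptt y) : ℂ) - (act T' (ptt y) : ℂ)
      = Complex.I * ((max y 1 : ℝ) : ℂ) * ((α : ℝ) : ℂ) + ((β : ℝ) : ℂ) := by
    intro y
    rw [act_coe T hdT h10, act_coe T' hdT' h10', ptt_coe, hαc, hβc]
    field_simp
    ring
  obtain ⟨cJ, hcJ0, hcJ⟩ := hj.simple_pole
  have hTend := tendsto_act_ptt T hdT h10 ha hd
  have hTend' := tendsto_act_ptt T' hdT' h10' ha' hd'
  set F : ℝ → ℂ := fun y =>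
    j (act T (ptt y)) * Complex.exp (2 * Real.pi * Complex.I * (act T (ptt y) : ℂ)) with hFdef
  set F' : ℝ → ℂ := fun y =>
    j (act T' (ptt y)) * Complex.exp (2 * Real.pi * Complex.I * (act T' (ptt y) : ℂ)) with hF'def
  have hFt : Filter.Tendsto F Filter.atTop (nhds cJ) := hcJ.comp hTend
  have hF't : Filter.Tendsto F' Filter.atTop (nhds cJ) := hcJ.comp hTend'
  have hdiv : Filter.Tendsto (fun y => F y / F' y) Filter.atTop (nhds 1) := by
    have h2 := hFt.div hF't hcJ0
    rw [div_self hcJ0] at h2; exact h2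
  set G : ℝ → ℂ := fun y => Complex.exp
    (2 * Real.pi * Complex.I * ((act T (ptt y) : ℂ) - (act T' (ptt y) : ℂ))) with hGdef
  have hevent : ∀ᶠ y in Filter.atTop, F y / F' y = G y := by
    have hne : ∀ᶠ y in Filter.atTop, F y ≠ 0 := hFt.eventually_ne hcJ0
    filter_upwards [hne] with y hy
    have hjne : j (act T (ptt y)) ≠ 0 := by
      intro h0
      apply hy
      rw [hFdef]
      simp [h0]
    have hFF : F' y = j (act T (ptt y)) *
        Complex.exp (2 * Real.pi * Complex.I * (act T' (ptt y) : ℂ)) := by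
      rw [hF'def]
      simp only
      rw [← h (ptt y)]
    rw [hFdef, hGdef]
    simp only
    rw [hFF, mul_div_mul_left _ _ hjne, ← Complex.exp_sub]
    congr 1
    ring
  have hGt : Filter.Tendsto G Filter.atTop (nhds 1) := hdiv.congr' hevent
  have hGnorm : ∀ y : ℝ, ‖G y‖ = Real.exp (-(2 * Real.pi * α * max y 1)) := by
    intro y
    rw [hGdef]
    simp only
    rw [hwdiff y, Complex.norm_exp]
    congr 1
    simp [Complex.mul_re, Complex.mul_im, Complex.add_re, Complex.add_im]
    ring
  have hnt : Filter.Tendsto (fun y : ℝ => Real.exp (-(2 * Real.pi * α * max y 1)))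
      Filter.atTop (nhds 1) := by
    have h2 : Filter.Tendsto (fun y => ‖G y‖) Filter.atTop (nhds 1) := by
      have := hGt.norm
      simpa using this
    have h3 : (fun y => ‖G y‖) =
        fun y : ℝ => Real.exp (-(2 * Real.pi * α * max y 1)) := funext hGnorm
    rwa [h3] at h2
  have hL : Filter.Tendsto (fun y : ℝ => -(2 * Real.pi * α * max y 1))
      Filter.atTop (nhds 0) := by
    have hlog := (Real.continuousAt_log one_ne_zero).tendsto.comp hnt
    rw [Real.log_one] at hlog
    have : (Real.log ∘ fun y : ℝ => Real.exp (-(2 * Real.pi * α * max y 1))) =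
        fun y : ℝ => -(2 * Real.pi * α * max y 1) := by
      funext y; simp [Real.log_exp]
    rwa [this] at hlog
  have hαz : α = 0 := by
    have h1 : Filter.Tendsto (fun y : ℝ => -(2 * Real.pi * α * max (y + 1) 1))
        Filter.atTop (nhds 0) :=
      hL.comp (tendsto_atTop_add_const_right _ 1 tendsto_id)
    have h2 := h1.sub hL
    rw [sub_zero] at h2
    have h3 : ∀ᶠ y in (Filter.atTop : Filter ℝ),
        -(2 * Real.pi * α * max (y + 1) 1) - -(2 * Real.pi * α * max y 1)
          = -(2 * Real.pi * α) := by
      filter_upwards [Filter.eventually_ge_atTop (1 : ℝ)] with y hy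
      rw [max_eq_left (by linarith), max_eq_left hy]
      ring
    have h4 : Filter.Tendsto (fun _ : ℝ => -(2 * Real.pi * α)) Filter.atTop (nhds 0) :=
      Filter.Tendsto.congr' h3 h2
    have h5 : -(2 * Real.pi * α) = 0 := tendsto_nhds_unique tendsto_const_nhds h4
    have h6 : 2 * Real.pi * α = 0 := by linarith
    rcases mul_eq_zero.1 h6 with h7 | h7
    · exact absurd h7 (by positivity)
    · exact h7
  have hGconst : ∀ y : ℝ, G y = Complex.exp (2 * Real.pi * Complex.I * ((β : ℝ) : ℂ)) := by
    intro y
    rw [hGdef]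
    simp only
    rw [hwdiff y, hαz]
    norm_num
  have hexp1 : Complex.exp (2 * Real.pi * Complex.I * ((β : ℝ) : ℂ)) = 1 := by
    refine tendsto_nhds_unique ?_ hGt
    rw [show G = fun _ : ℝ => Complex.exp (2 * Real.pi * Complex.I * ((β : ℝ) : ℂ)) from
      funext hGconst]
    exact tendsto_const_nhds
  obtain ⟨n, hn⟩ := Complex.exp_eq_one_iff.1 hexp1
  have hβn : β = (n : ℝ) := by
    have hπ : (Real.pi : ℂ) ≠ 0 := by exact_mod_cast Real.pi_ne_zero
    have hI := Complex.I_ne_zero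
    have hne : (2 * (Real.pi : ℂ) * Complex.I) ≠ 0 := by
      simp [Complex.I_ne_zero, hπ]
    have h2 : ((β : ℝ) : ℂ) = (n : ℂ) := by
      apply mul_left_cancel₀ hne
      rw [hn]; ring
    exact_mod_cast h2
  have hBb : 0 ≤ (T 0 1 : ℝ) / (T 1 1 : ℝ) ∧ (T 0 1 : ℝ) / (T 1 1 : ℝ) < 1 := by
    constructor
    · apply div_nonneg <;> [exact_mod_cast hb0; exact_mod_cast hd.le]
    · rw [div_lt_one (by exact_mod_cast hd)]
      exact_mod_cast hbd
  have hBb' : 0 ≤ (T' 0 1 : ℝ) / (T' 1 1 : ℝ) ∧ (T' 0 1 : ℝ) / (T' 1 1 : ℝ) < 1 := by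
    constructor
    · apply div_nonneg <;> [exact_mod_cast hb0'; exact_mod_cast hd'.le]
    · rw [div_lt_one (by exact_mod_cast hd')]
      exact_mod_cast hbd'
  have hn0 : n = 0 := by
    have h1 : -1 < (n : ℝ) := by rw [← hβn, hβdef]; cases hBb; cases hBb'; linarith
    have h2 : (n : ℝ) < 1 := by rw [← hβn, hβdef]; cases hBb; cases hBb'; linarith
    have h1' : -1 < n := by exact_mod_cast h1
    have h2' : n < 1 := by exact_mod_cast h2
    omega
  have hβz : β = 0 := by rw [hβn, hn0]; simp
  have hcross1 : T 0 0 * T' 1 1 = T' 0 0 * T 1 1 := by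
    have h1 : (T 0 0 : ℝ) / (T 1 1 : ℝ) = (T' 0 0 : ℝ) / (T' 1 1 : ℝ) := by
      have := hαz; rw [hαdef] at this; linarith
    rw [div_eq_div_iff hdrne hdrne'] at h1
    exact_mod_cast h1
  have hcross2 : T 0 1 * T' 1 1 = T' 0 1 * T 1 1 := by
    have h1 : (T 0 1 : ℝ) / (T 1 1 : ℝ) = (T' 0 1 : ℝ) / (T' 1 1 : ℝ) := by
      have := hβz; rw [hβdef] at this; linarith
    rw [div_eq_div_iff hdrne hdrne'] at h1
    exact_mod_cast h1
  have key : ∀ (S S' : Matrix (Fin 2) (Fin 2) ℤ),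
      Int.gcd (Int.gcd (S 0 0) (S 0 1)) (S 1 1) = 1 →
      S 0 0 * S' 1 1 = S' 0 0 * S 1 1 → S 0 1 * S' 1 1 = S' 0 1 * S 1 1 →
      S 1 1 ∣ S' 1 1 := by
    intro S S' hgcdS hc1 hc2
    set x1 := Int.gcdA (S 0 0) (S 0 1) with hx1
    set y1 := Int.gcdB (S 0 0) (S 0 1) with hy1
    set X := Int.gcdA ((Int.gcd (S 0 0) (S 0 1) : ℤ)) (S 1 1) with hX
    set Y := Int.gcdB ((Int.gcd (S 0 0) (S 0 1) : ℤ)) (S 1 1) with hY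
    have hb1 : ((Int.gcd (S 0 0) (S 0 1) : ℤ)) = S 0 0 * x1 + S 0 1 * y1 :=
      Int.gcd_eq_gcd_ab _ _
    have hb2 : ((Int.gcd ((Int.gcd (S 0 0) (S 0 1) : ℤ)) (S 1 1) : ℤ))
        = (Int.gcd (S 0 0) (S 0 1) : ℤ) * X + S 1 1 * Y := Int.gcd_eq_gcd_ab _ _
    rw [hgcdS] at hb2
    refine ⟨S' 0 0 * x1 * X + S' 0 1 * y1 * X + S' 1 1 * Y, ?_⟩
    have hone : (1 : ℤ) = S 0 0 * x1 * X + S 0 1 * y1 * X + S 1 1 * Y := by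
      rw [show ((1 : ℕ) : ℤ) = 1 from rfl] at hb2
      linear_combination hb2 + X * hb1
    linear_combination S' 1 1 * hone + x1 * X * hc1 + y1 * X * hc2
  have hdvd1 : T 1 1 ∣ T' 1 1 := key T T' hgcd hcross1 hcross2
  have hdvd2 : T' 1 1 ∣ T 1 1 := key T' T hgcd' hcross1.symm hcross2.symm
  have hdd : T 1 1 = T' 1 1 := Int.dvd_antisymm hd.le hd'.le hdvd1 hdvd2
  have haa : T 0 0 = T' 0 0 := by
    have := hcross1
    rw [hdd] at this
    exact mul_right_cancel₀ (by exact_mod_cast hd'.ne') this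
  have hbb : T 0 1 = T' 0 1 := by
    have := hcross2
    rw [hdd] at this
    exact mul_right_cancel₀ (by exact_mod_cast hd'.ne') this
  refine ⟨by rw [← hprod, ← hprod', haa, hdd], ?_⟩
  ext i jj
  fin_cases i <;> fin_cases jj
  · exact haa
  · exact hbb
  · exact h10.trans h10'.symm
  · exact hdd

/-- **Proposition.** For every `g ∈ GL₂⁺(ℚ)` there exist a unique `N ∈ ℤ_{>0}` and a unique
`g' ∈ C(N)` such that `j(gz) = j(g'z)` for all `z ∈ ℍ`. -/
theorem unique_CN_representative (j : UpperHalfPlane → ℂ) (hj : IsJFunction j)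
    (g : Matrix (Fin 2) (Fin 2) ℚ) (hg : 0 < g.det) :
    ∃! p : ℤ × Matrix (Fin 2) (Fin 2) ℤ,
      0 < p.1 ∧ p.2 ∈ Cset p.1 ∧ ∀ z, j (qSMul g hg z) = j (act p.2 z) := by
  obtain ⟨γ, T, hdT, hTC, hact⟩ := exists_rep g hg
  refine ⟨(T.det, T), ⟨hdT, hTC, fun z => ?_⟩, ?_⟩
  · rw [hact z]
    exact hj.invariant γ (act T z)
  · rintro ⟨N', T'⟩ ⟨hN', hT'C, hj'⟩
    have hjj : ∀ z, j (act T' z) = j (act T z) := fun z => by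
      rw [← hj' z, hact z]
      exact hj.invariant γ (act T z)
    obtain ⟨hNeq, hTeq⟩ := rep_unique j hj N' T.det T' T hN' hdT hT'C hTC hjj
    exact Prod.ext hNeq hTeq

end SingMod
end
end

section
/- Let n be a positive integer, let f be a non-constant j-map, and let α₁, …, αₙ ∈ ℂ be pairwise distinct. Then the functions h₁, …, hₙ : ℍ → ℂ defined by hᵢ(z) = f(z) − αᵢ are multiplicatively independent modulo constants. -/
open UpperHalfPlane Matrix MatrixGroups Complex Filter Polynomial IntermediateField
open scoped Manifold Topology

noncomputable section

namespace SingMod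

set_option synthInstance.maxHeartbeats 400000 in
lemma qSMul_surjective (g : Matrix (Fin 2) (Fin 2) ℚ) (hg : 0 < g.det) :
    Function.Surjective (qSMul g hg) := by
  intro w
  refine ⟨(toGLPos g hg)⁻¹ • w, ?_⟩
  show toGLPos g hg • (toGLPos g hg)⁻¹ • w = w
  rw [smul_inv_smul]

/-- **Proposition.** For a non-constant `j`-map `f` and pairwise distinct `α₁, …, αₙ ∈ ℂ`,
the functions `z ↦ f(z) - αᵢ` are multiplicatively independent modulo constants. -/
theorem multindep_one_jmap (j : UpperHalfPlane → ℂ) (hj : IsJFunction j)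
    (n : ℕ) (hn : 0 < n) (f : UpperHalfPlane → ℂ) (hf : IsJMap j f)
    (hfnc : ¬ IsConstFun f) (α : Fin n → ℂ) (hα : Function.Injective α) :
    MultIndepModConst (fun i z => f z - α i) := by
  -- Step 1: the range of `f` is the range of `j`, which is infinite.
  obtain ⟨g, hg, hfe⟩ : ∃ (g : Matrix (Fin 2) (Fin 2) ℚ) (hg : 0 < g.det),
      ∀ z, f z = j (qSMul g hg z) := by
    rcases hf with ⟨x, _, hx⟩ | h
    · exact absurd ⟨x, hx⟩ hfnc
    · exact h
  have hrange : Set.range f = Set.range j := by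
    apply Set.eq_of_subset_of_subset
    · rintro _ ⟨z, rfl⟩; exact ⟨_, (hfe z).symm⟩
    · rintro _ ⟨w, rfl⟩
      obtain ⟨z, hz⟩ := qSMul_surjective g hg w
      exact ⟨z, by rw [hfe, hz]⟩
  have hinf : (Set.range f).Infinite := by
    rw [hrange]
    apply IsPreconnected.infinite_of_nontrivial (isPreconnected_range hj.holo.continuous)
    exact ⟨1728, ⟨UpperHalfPlane.I, hj.at_I⟩, 0, ⟨rho, hj.at_rho⟩, by norm_num⟩
  -- Step 2: main argument.
  rintro a ⟨i0, hi0⟩ ⟨c, hc⟩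
  simp only at hc
  by_cases hc0 : c = 0
  · -- the product can never be zero unless `f z` hits some `α i`
    have hsub : Set.range f ⊆ Set.range α := by
      rintro _ ⟨z, rfl⟩
      by_contra hzn
      have hne : ∀ i, f z - α i ≠ 0 := fun i h =>
        hzn ⟨i, by linear_combination -h⟩
      have hprod : ∏ i : Fin n, (f z - α i) ^ (a i) ≠ 0 :=
        Finset.prod_ne_zero_iff.mpr fun i _ => zpow_ne_zero _ (hne i)
      rw [hc z, hc0] at hprod
      exact hprod rfl
    exact hinf ((Set.finite_range α).subset hsub)
  · -- polynomial identity argument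
    set A : Polynomial ℂ := ∏ i : Fin n, (X - C (α i)) ^ (a i).toNat with hA
    set B : Polynomial ℂ := C c * ∏ i : Fin n, (X - C (α i)) ^ (-(a i)).toNat with hB
    have hProot : ∀ w ∈ Set.range f \ Set.range α, (A - B).IsRoot w := by
      rintro w ⟨⟨z, rfl⟩, hwn⟩
      have hne : ∀ i, f z - α i ≠ 0 := fun i h =>
        hwn ⟨i, by linear_combination -h⟩
      have key : ∏ i : Fin n, (f z - α i) ^ (a i).toNat
          = c * ∏ i : Fin n, (f z - α i) ^ (-(a i)).toNat := by
        have h1 : ∀ i : Fin n, (f z - α i) ^ (a i)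
            = (f z - α i) ^ (a i).toNat / (f z - α i) ^ (-(a i)).toNat := by
          intro i
          rw [← zpow_natCast, ← zpow_natCast, ← zpow_sub₀ (hne i)]
          congr 1
          omega
        have h2 := hc z
        rw [Finset.prod_congr rfl (fun i _ => h1 i), Finset.prod_div_distrib] at h2
        have hden : ∏ i : Fin n, (f z - α i) ^ (-(a i)).toNat ≠ 0 :=
          Finset.prod_ne_zero_iff.mpr fun i _ => pow_ne_zero _ (hne i)
        exact (div_eq_iff hden).mp h2
      simp only [Polynomial.IsRoot, hA, hB, Polynomial.eval_sub, Polynomial.eval_mul,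
        Polynomial.eval_prod, Polynomial.eval_pow, Polynomial.eval_sub, Polynomial.eval_X,
        Polynomial.eval_C]
      rw [key]; ring
    have hAB : A = B := by
      have h0 : A - B = 0 := by
        apply Polynomial.eq_zero_of_infinite_isRoot
        exact (hinf.diff (Set.finite_range α)).mono hProot
      exact sub_eq_zero.mp h0
    -- evaluate at `α i0` to get a contradiction
    have hev := congrArg (Polynomial.eval (α i0)) hAB
    simp only [hA, hB, Polynomial.eval_mul, Polynomial.eval_prod, Polynomial.eval_pow,
      Polynomial.eval_sub, Polynomial.eval_X, Polynomial.eval_C] at hev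
    have hterm : ∀ (i : Fin n) (e : ℕ), (i = i0 → e = 0) → (α i0 - α i) ^ e ≠ 0 := by
      intro i e he
      rcases eq_or_ne i i0 with rfl | hii
      · rw [he rfl, pow_zero]; exact one_ne_zero
      · exact pow_ne_zero _ (sub_ne_zero.mpr fun h => hii (hα h).symm)
    rcases hi0.lt_or_gt with hlt | hgt
    · -- `a i0 < 0`: RHS is zero, LHS is not
      have hR : c * ∏ i : Fin n, (α i0 - α i) ^ (-(a i)).toNat = 0 := by
        rw [Finset.prod_eq_zero (Finset.mem_univ i0)
          (by rw [sub_self]; exact zero_pow (by omega))]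
        ring
      have hL : ∏ i : Fin n, (α i0 - α i) ^ (a i).toNat ≠ 0 :=
        Finset.prod_ne_zero_iff.mpr fun i _ => hterm i _ (fun h => by subst h; omega)
      rw [hev, hR] at hL
      exact hL rfl
    · -- `a i0 > 0`: LHS is zero, RHS is not
      have hL : ∏ i : Fin n, (α i0 - α i) ^ (a i).toNat = 0 :=
        Finset.prod_eq_zero (Finset.mem_univ i0)
          (by rw [sub_self]; exact zero_pow (by omega))
      have hR : c * ∏ i : Fin n, (α i0 - α i) ^ (-(a i)).toNat ≠ 0 :=
        mul_ne_zero hc0 (Finset.prod_ne_zero_iff.mpr fun i _ =>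
          hterm i _ (fun h => by subst h; omega))
      rw [← hev, hL] at hR
      exact hR rfl

end SingMod
end
end

section
/- Let n be a positive integer and let f₁, …, fₙ, f be pairwise distinct non-constant j-maps. Then the functions h₁, …, hₙ : ℍ → ℂ defined by hᵢ(z) = fᵢ(z) − f(z) are multiplicatively independent modulo constants. -/
open UpperHalfPlane Matrix MatrixGroups Complex Filter Polynomial IntermediateField
open scoped Manifold Topology

noncomputable section

namespace SingMod

lemma toGLPos_coe (g : Matrix (Fin 2) (Fin 2) ℚ) (hg : 0 < g.det) (i k : Fin 2) :
    ((toGLPos g hg : GL (Fin 2) ℝ) : Matrix (Fin 2) (Fin 2) ℝ) i k = (g i k : ℝ) := rfl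

lemma qSMul_coe (g : Matrix (Fin 2) (Fin 2) ℚ) (hg : 0 < g.det) (z : UpperHalfPlane) :
    ((qSMul g hg z : UpperHalfPlane) : ℂ) =
      (((g 0 0 : ℚ) : ℝ) * z + ((g 0 1 : ℚ) : ℝ)) /
        (((g 1 0 : ℚ) : ℝ) * z + ((g 1 1 : ℚ) : ℝ)) := by
  rw [qSMul, Subgroup.smul_def,
    UpperHalfPlane.coe_smul_of_det_pos ((Matrix.mem_glpos _).mp (toGLPos g hg).2)]
  rfl

lemma qSMul_denom_ne_zero (g : Matrix (Fin 2) (Fin 2) ℚ) (hg : 0 < g.det) (z : UpperHalfPlane) :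
    (((g 1 0 : ℚ) : ℝ) : ℂ) * z + (((g 1 1 : ℚ) : ℝ) : ℂ) ≠ 0 :=
  UpperHalfPlane.denom_ne_zero (toGLPos g hg) z
lemma toGLPos_mul_s19 (A B : Matrix (Fin 2) (Fin 2) ℚ) (hA : 0 < A.det) (hB : 0 < B.det)
    (hAB : 0 < (A * B).det) :
    toGLPos (A * B) hAB = toGLPos A hA * toGLPos B hB := by
  apply Subtype.ext
  apply Units.ext
  show (A * B).map ((↑) : ℚ → ℝ) = (A.map ((↑) : ℚ → ℝ)) * (B.map ((↑) : ℚ → ℝ))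
  exact Matrix.map_mul (f := Rat.castHom ℝ)

lemma det_mul_pos {A B : Matrix (Fin 2) (Fin 2) ℚ} (hA : 0 < A.det) (hB : 0 < B.det) :
    0 < (A * B).det := by rw [Matrix.det_mul]; positivity

lemma qSMul_mul_s19 (A B : Matrix (Fin 2) (Fin 2) ℚ) (hA : 0 < A.det) (hB : 0 < B.det)
    (z : UpperHalfPlane) :
    qSMul (A * B) (det_mul_pos hA hB) z = qSMul A hA (qSMul B hB z) := by
  rw [qSMul, qSMul, qSMul, toGLPos_mul_s19 A B hA hB, mul_smul]

lemma qSMul_congr_s19 {A B : Matrix (Fin 2) (Fin 2) ℚ} (h : A = B) (hA : 0 < A.det)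
    (hB : 0 < B.det) (z : UpperHalfPlane) : qSMul A hA z = qSMul B hB z := by
  subst h; rfl
/-- Cast of an `SL(2,ℤ)` matrix to a rational matrix. -/
def slq (γ : SL(2, ℤ)) : Matrix (Fin 2) (Fin 2) ℚ :=
  ((γ : Matrix (Fin 2) (Fin 2) ℤ)).map ((↑) : ℤ → ℚ)

lemma slq_det (γ : SL(2, ℤ)) : (slq γ).det = 1 := by
  rw [slq, show ((↑) : ℤ → ℚ) = ⇑(Int.castRingHom ℚ) from rfl, ← RingHom.mapMatrix_apply,
    ← RingHom.map_det, Matrix.SpecialLinearGroup.det_coe]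
  rfl

lemma slq_det_pos (γ : SL(2, ℤ)) : 0 < (slq γ).det := by rw [slq_det]; norm_num

lemma qSMul_slq (γ : SL(2, ℤ)) (z : UpperHalfPlane) :
    qSMul (slq γ) (slq_det_pos γ) z = γ • z := by
  apply UpperHalfPlane.ext
  rw [qSMul_coe]
  rw [UpperHalfPlane.specialLinearGroup_apply]
  simp only [UpperHalfPlane.coe_mk, slq, Matrix.map_apply]
  push_cast
  norm_num
lemma exists_fixed (M : Matrix (Fin 2) (Fin 2) ℚ) (hM : 0 < M.det)
    (ht : M.trace ^ 2 < 4 * M.det) : ∃ z : UpperHalfPlane, qSMul M hM z = z := by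
  have hdet : M.det = M 0 0 * M 1 1 - M 0 1 * M 1 0 := Matrix.det_fin_two M
  have htr : M.trace = M 0 0 + M 1 1 := Matrix.trace_fin_two M
  set A : ℝ := ((M 0 0 : ℚ) : ℝ) with hA
  set B : ℝ := ((M 0 1 : ℚ) : ℝ) with hB
  set C : ℝ := ((M 1 0 : ℚ) : ℝ) with hC
  set D : ℝ := ((M 1 1 : ℚ) : ℝ) with hD
  have hdetR : ((M.det : ℚ) : ℝ) = A * D - B * C := by rw [hdet]; push_cast; ring
  have htrR : ((M.trace : ℚ) : ℝ) = A + D := by rw [htr]; push_cast; ring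
  have hΔ : 0 < 4 * (A * D - B * C) - (A + D) ^ 2 := by
    rw [← hdetR, ← htrR]
    have : ((M.trace : ℚ) : ℝ) ^ 2 < 4 * ((M.det : ℚ) : ℝ) := by exact_mod_cast ht
    linarith
  have hCne : C ≠ 0 := by
    intro h
    rw [h] at hΔ
    nlinarith [sq_nonneg (A - D), hΔ]
  set Δ : ℝ := 4 * (A * D - B * C) - (A + D) ^ 2 with hΔdef
  set x : ℝ := (A - D) / (2 * C) with hx
  set y : ℝ := Real.sqrt Δ / (2 * |C|) with hy
  have hypos : 0 < y := by
    apply div_pos (Real.sqrt_pos.mpr hΔ)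
    simpa using abs_pos.mpr hCne
  have him : (((x : ℂ) + (y : ℂ) * Complex.I).im) = y := by simp
  refine ⟨⟨(x : ℂ) + (y : ℂ) * Complex.I, by simpa using hypos⟩, ?_⟩
  have hy2 : y ^ 2 = Δ / (4 * C ^ 2) := by
    rw [hy, div_pow, Real.sq_sqrt hΔ.le]
    congr 1
    rw [mul_pow, _root_.sq_abs]
    norm_num
  have h1 : 2 * C * x + (D - A) = 0 := by rw [hx]; field_simp; ring
  have h2 : C * (x ^ 2 + y ^ 2) + B = 0 := by
    rw [hx, hy2, hΔdef]
    field_simp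
    ring
  have h1c : 2 * (C : ℂ) * (x : ℂ) + ((D : ℂ) - (A : ℂ)) = 0 := by exact_mod_cast h1
  have h2c : (C : ℂ) * ((x : ℂ) ^ 2 + (y : ℂ) ^ 2) + (B : ℂ) = 0 := by exact_mod_cast h2
  apply UpperHalfPlane.ext
  rw [qSMul_coe]
  show ((A : ℂ) * ((x : ℂ) + (y : ℂ) * Complex.I) + (B : ℂ)) /
      ((C : ℂ) * ((x : ℂ) + (y : ℂ) * Complex.I) + (D : ℂ)) = (x : ℂ) + (y : ℂ) * Complex.I
  rw [div_eq_iff]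
  · linear_combination (-((x : ℂ) + (y : ℂ) * Complex.I)) * h1c + h2c -
      ((C : ℂ) * (y : ℂ) ^ 2) * Complex.I_sq
  · exact qSMul_denom_ne_zero M hM ⟨(x : ℂ) + (y : ℂ) * Complex.I, by simpa using hypos⟩
lemma slq_mul_entry (m : Matrix (Fin 2) (Fin 2) ℤ) (hm : m.det = 1)
    (B : Matrix (Fin 2) (Fin 2) ℚ) (i k : Fin 2) :
    (slq ⟨m, hm⟩ * B) i k = (m i 0 : ℚ) * B 0 k + (m i 1 : ℚ) * B 1 k := by
  simp [slq, Matrix.mul_apply, Fin.sum_univ_two, Matrix.map_apply]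

example (a b c d : ℤ) (h : a * d - b * c = 1) : (!![a, b; c, d] : Matrix (Fin 2) (Fin 2) ℤ).det = 1 := by
  simpa [Matrix.det_fin_two_of] using h
lemma exists_triangular (B : Matrix (Fin 2) (Fin 2) ℚ) (hB : 0 < B.det) :
    ∃ γ : SL(2, ℤ), (slq γ * B) 1 0 = 0 ∧ 0 < (slq γ * B) 0 0 := by
  set p : ℚ := B 0 0 with hp
  set r : ℚ := B 1 0 with hr
  obtain ⟨u, v, huv, hlin⟩ : ∃ u v : ℤ, IsCoprime u v ∧ (u : ℚ) * p + (v : ℚ) * r = 0 := by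
    have hpden : ((p.den : ℚ)) ≠ 0 := by positivity
    have hrden : ((r.den : ℚ)) ≠ 0 := by positivity
    have hpnum : (p.num : ℚ) = p * p.den := by rw [Rat.mul_den_eq_num]
    have hrnum : (r.num : ℚ) = r * r.den := by rw [Rat.mul_den_eq_num]
    set q1 : ℤ := p.num * r.den with hq1
    set q2 : ℤ := r.num * p.den with hq2
    have hq1' : (q1 : ℚ) = p * (p.den * r.den) := by push_cast [hq1]; rw [hpnum]; ring
    have hq2' : (q2 : ℚ) = r * (p.den * r.den) := by push_cast [hq2]; rw [hrnum]; ring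
    have hne : ¬(q1 = 0 ∧ q2 = 0) := by
      rintro ⟨h1, h2⟩
      have hden : ((p.den : ℚ) * r.den) ≠ 0 := by positivity
      have hp0 : p = 0 := by
        have := hq1'; rw [h1] at this
        rw [Int.cast_zero, eq_comm, ← mul_assoc] at this
        rcases mul_eq_zero.mp this with h | h
        · rcases mul_eq_zero.mp h with h' | h'
          exacts [h', absurd h' hpden]
        · exact absurd h hrden
      have hr0 : r = 0 := by
        have := hq2'; rw [h2] at this
        rw [Int.cast_zero, eq_comm, ← mul_assoc] at this
        rcases mul_eq_zero.mp this with h | h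
        · rcases mul_eq_zero.mp h with h' | h'
          exacts [h', absurd h' hpden]
        · exact absurd h hrden
      have : B.det = 0 := by
        rw [Matrix.det_fin_two, ← hp, ← hr, hp0, hr0]; ring
      exact absurd this (ne_of_gt hB)
    set g : ℕ := Int.gcd q1 q2 with hg
    have hgpos : 0 < g := by
      rcases Nat.eq_zero_or_pos g with h | h
      · exact absurd (Int.gcd_eq_zero_iff.mp h) hne
      · exact h
    have hgdvd1 : (g : ℤ) ∣ q1 := Int.gcd_dvd_left q1 q2
    have hgdvd2 : (g : ℤ) ∣ q2 := Int.gcd_dvd_right q1 q2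
    refine ⟨q2 / g, -(q1 / g), ?_, ?_⟩
    · rw [Int.isCoprime_iff_gcd_eq_one, Int.gcd_neg, Int.gcd_comm]
      exact Int.gcd_div_gcd_div_gcd hgpos
    · have hgq : (g : ℚ) ≠ 0 := by positivity
      have e2 : ((q2 / (g : ℤ) : ℤ) : ℚ) * (g : ℚ) = (q2 : ℚ) := by
        exact_mod_cast congrArg (fun t : ℤ => (t : ℚ)) (Int.ediv_mul_cancel hgdvd2)
      have e1 : ((q1 / (g : ℤ) : ℤ) : ℚ) * (g : ℚ) = (q1 : ℚ) := by
        exact_mod_cast congrArg (fun t : ℤ => (t : ℚ)) (Int.ediv_mul_cancel hgdvd1)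
      have h1 : ((q2 / (g : ℤ) : ℤ) : ℚ) = (q2 : ℚ) / (g : ℚ) := eq_div_of_mul_eq hgq e2
      have h2 : ((q1 / (g : ℤ) : ℤ) : ℚ) = (q1 : ℚ) / (g : ℚ) := eq_div_of_mul_eq hgq e1
      push_cast [h1, h2]
      field_simp
      linear_combination p * hq2' - r * hq1'
  obtain ⟨α, β, hαβ⟩ := huv
  have hdet1 : (!![β, -α; u, v] : Matrix (Fin 2) (Fin 2) ℤ).det = 1 := by
    rw [Matrix.det_fin_two_of]; linear_combination hαβ
  have hdet2 : (!![-β, α; -u, -v] : Matrix (Fin 2) (Fin 2) ℤ).det = 1 := by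
    rw [Matrix.det_fin_two_of]; linear_combination hαβ
  have hz1 : (slq ⟨_, hdet1⟩ * B) 1 0 = 0 := by
    rw [slq_mul_entry]
    simpa using hlin
  have ht0 : (slq ⟨_, hdet1⟩ * B) 0 0 ≠ 0 := by
    intro h0
    have hd : (slq ⟨_, hdet1⟩ * B).det = B.det := by
      rw [Matrix.det_mul, slq_det ⟨_, hdet1⟩, one_mul]
    rw [Matrix.det_fin_two, h0, hz1] at hd
    simp at hd
    rw [← hd] at hB
    exact lt_irrefl 0 hB
  rcases ht0.lt_or_gt with hneg | hpos
  · refine ⟨⟨_, hdet2⟩, ?_, ?_⟩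
    · rw [slq_mul_entry] at hz1 ⊢
      simp at hz1 ⊢
      push_cast at hz1 ⊢
      linarith
    · rw [slq_mul_entry] at hneg ⊢
      simp at hneg ⊢
      push_cast at hneg ⊢
      linarith
  · exact ⟨⟨_, hdet1⟩, hz1, hpos⟩
lemma slq_mul (γ δ : SL(2, ℤ)) : slq (γ * δ) = slq γ * slq δ := by
  rw [slq, slq, slq, Matrix.SpecialLinearGroup.coe_mul]
  exact Matrix.map_mul (f := Int.castRingHom ℚ)

lemma exists_small_trace (B : Matrix (Fin 2) (Fin 2) ℚ) (hB : 0 < B.det) :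
    ∃ γ : SL(2, ℤ), ((slq γ * B).trace) ^ 2 < 4 * B.det := by
  obtain ⟨γ₁, hz, hapos⟩ := exists_triangular B hB
  set B' := slq γ₁ * B with hB'
  have hdet' : B'.det = B.det := by rw [hB', Matrix.det_mul, slq_det, one_mul]
  set a : ℚ := B' 0 0 with ha
  set b : ℚ := B' 0 1 with hb
  set d : ℚ := B' 1 1 with hd
  have had : B.det = a * d := by
    rw [← hdet', Matrix.det_fin_two, ← ha, ← hb, ← hd, hz]; ring
  have hdpos : 0 < d := by nlinarith [hB, had, hapos]
  rcases le_or_gt a d with hle | hlt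
  · set m : ℤ := round (-b / a) with hm
    have hr := abs_le.mp (abs_sub_round (-b / a))
    have hdetm : (!![m, -1; 1, 0] : Matrix (Fin 2) (Fin 2) ℤ).det = 1 := by
      rw [Matrix.det_fin_two_of]; ring
    refine ⟨⟨_, hdetm⟩ * γ₁, ?_⟩
    rw [slq_mul ⟨_, hdetm⟩ γ₁, mul_assoc, ← hB']
    have htr : (slq ⟨_, hdetm⟩ * B').trace = (m : ℚ) * a + b := by
      rw [Matrix.trace_fin_two, slq_mul_entry, slq_mul_entry, ← ha, ← hb, hz]
      simp
    rw [htr, had]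
    have hane : a ≠ 0 := ne_of_gt hapos
    have hab : a * (-b / a) = -b := by field_simp
    nlinarith [hr.1, hr.2, hapos, hdpos, hle,
      mul_le_mul_of_nonneg_left hr.2 hapos.le,
      mul_le_mul_of_nonneg_left hr.1 hapos.le]
  · set m : ℤ := round (-b / d) with hm
    have hr := abs_le.mp (abs_sub_round (-b / d))
    have hdetm : (!![0, -1; 1, m] : Matrix (Fin 2) (Fin 2) ℤ).det = 1 := by
      rw [Matrix.det_fin_two_of]; ring
    refine ⟨⟨_, hdetm⟩ * γ₁, ?_⟩
    rw [slq_mul ⟨_, hdetm⟩ γ₁, mul_assoc, ← hB']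
    have htr : (slq ⟨_, hdetm⟩ * B').trace = b + (m : ℚ) * d := by
      rw [Matrix.trace_fin_two, slq_mul_entry, slq_mul_entry, ← ha, ← hb, ← hd, hz]
      simp
    rw [htr, had]
    have hdne : d ≠ 0 := ne_of_gt hdpos
    have hdb : d * (-b / d) = -b := by field_simp
    nlinarith [hr.1, hr.2, hapos, hdpos, hlt,
      mul_le_mul_of_nonneg_left hr.2 hdpos.le,
      mul_le_mul_of_nonneg_left hr.1 hdpos.le]
lemma exists_j_eq (j : UpperHalfPlane → ℂ) (hj : IsJFunction j)
    (g g' : Matrix (Fin 2) (Fin 2) ℚ) (hg : 0 < g.det) (hg' : 0 < g'.det) :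
    ∃ z : UpperHalfPlane, j (qSMul g hg z) = j (qSMul g' hg' z) := by
  have hg'ne : g'.det ≠ 0 := ne_of_gt hg'
  have hg'inv : 0 < g'⁻¹.det := by
    rw [Matrix.det_nonsing_inv, Ring.inverse_eq_inv]
    exact inv_pos.mpr hg'
  have hBdet : 0 < (g * g'⁻¹).det := det_mul_pos hg hg'inv
  obtain ⟨γ, hγ⟩ := exists_small_trace (g * g'⁻¹) hBdet
  set M : Matrix (Fin 2) (Fin 2) ℚ := g'⁻¹ * (slq γ * g) with hM
  have hMdet : 0 < M.det := det_mul_pos hg'inv (det_mul_pos (slq_det_pos γ) hg)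
  have htr : M.trace = (slq γ * (g * g'⁻¹)).trace := by
    rw [hM, Matrix.trace_mul_comm, mul_assoc]
  have hdeteq : M.det = (g * g'⁻¹).det := by
    rw [hM, Matrix.det_mul, Matrix.det_mul, slq_det, Matrix.det_mul]
    ring
  have hM4 : M.trace ^ 2 < 4 * M.det := by rw [htr, hdeteq]; exact hγ
  obtain ⟨z, hzfix⟩ := exists_fixed M hMdet hM4
  refine ⟨z, ?_⟩
  have hkey : g' * M = slq γ * g := by
    rw [hM]
    exact Matrix.mul_nonsing_inv_cancel_left g' _ (isUnit_iff_ne_zero.mpr hg'ne)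
  have e1 : qSMul (slq γ * g) (det_mul_pos (slq_det_pos γ) hg) z
      = qSMul (slq γ) (slq_det_pos γ) (qSMul g hg z) := qSMul_mul_s19 _ _ _ _ z
  have e2 : qSMul (slq γ) (slq_det_pos γ) (qSMul g hg z) = γ • (qSMul g hg z) :=
    qSMul_slq γ _
  have e3 : qSMul (g' * M) (det_mul_pos hg' hMdet) z
      = qSMul g' hg' (qSMul M hMdet z) := qSMul_mul_s19 _ _ _ _ z
  have e5 : qSMul (g' * M) (det_mul_pos hg' hMdet) z
      = qSMul (slq γ * g) (det_mul_pos (slq_det_pos γ) hg) z := qSMul_congr_s19 hkey _ _ z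
  have : qSMul g' hg' z = γ • (qSMul g hg z) := by
    rw [← e2, ← e1, ← e5, e3, hzfix]
  rw [this, hj.invariant]
/-- The open upper half plane as a subset of `ℂ`. -/
def UU : Set ℂ := {z : ℂ | 0 < z.im}

lemma isOpen_UU : IsOpen UU := Complex.continuous_im.isOpen_preimage _ isOpen_Ioi

lemma preconnected_UU : IsPreconnected UU := (convex_halfSpace_im_gt 0).isPreconnected

lemma factor_vanishes {ι : Type*} (s : Finset ι) : ∀ F : ι → ℂ → ℂ,
    (∀ i ∈ s, AnalyticOnNhd ℂ (F i) UU) → (∀ w ∈ UU, ∏ i ∈ s, F i w = 0) →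
    ∃ i ∈ s, ∀ w ∈ UU, F i w = 0 := by
  classical
  induction s using Finset.induction_on with
  | empty =>
    intro F hF h0
    exfalso
    have := h0 Complex.I (by simp [UU])
    simpa using this
  | @insert a t hat ih =>
    intro F hF h0
    by_cases hall : ∀ w ∈ UU, F a w = 0
    · exact ⟨a, Finset.mem_insert_self a t, hall⟩
    · push_neg at hall
      obtain ⟨w₀, hw₀U, hw₀⟩ := hall
      have hH : AnalyticOnNhd ℂ (fun w => ∏ i ∈ t, F i w) UU :=
        Finset.analyticOnNhd_fun_prod t fun i hi => hF i (Finset.mem_insert_of_mem hi)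
      have hev : (fun w => ∏ i ∈ t, F i w) =ᶠ[𝓝 w₀] 0 := by
        have h1 : ∀ᶠ w in 𝓝 w₀, w ∈ UU := isOpen_UU.eventually_mem hw₀U
        have h2 : ∀ᶠ w in 𝓝 w₀, F a w ≠ 0 :=
          (hF a (Finset.mem_insert_self a t) w₀ hw₀U).continuousAt.eventually_ne hw₀
        filter_upwards [h1, h2] with w hwU hwne
        have hzero := h0 w hwU
        rw [Finset.prod_insert hat] at hzero
        have : ∏ i ∈ t, F i w = 0 := by
          rcases mul_eq_zero.mp hzero with h | h
          · exact absurd h hwne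
          · exact h
        simpa using this
      have hzero := hH.eqOn_zero_of_preconnected_of_eventuallyEq_zero preconnected_UU hw₀U hev
      obtain ⟨i, hit, hi⟩ := ih F (fun i hi' => hF i (Finset.mem_insert_of_mem hi'))
        (fun w hw => by simpa using hzero hw)
      exact ⟨i, Finset.mem_insert_of_mem hit, hi⟩
lemma jmap_diff (j : UpperHalfPlane → ℂ) (hj : IsJFunction j)
    (g : Matrix (Fin 2) (Fin 2) ℚ) (hg : 0 < g.det) :
    DifferentiableOn ℂ (fun w => j (qSMul g hg (UpperHalfPlane.ofComplex w))) UU := by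
  have hJ : DifferentiableOn ℂ (j ∘ UpperHalfPlane.ofComplex) {z | 0 < z.im} :=
    UpperHalfPlane.mdifferentiable_iff.mp hj.holo
  set C1 : ℂ := (((g 0 0 : ℚ) : ℝ) : ℂ)
  set C2 : ℂ := (((g 0 1 : ℚ) : ℝ) : ℂ)
  set C3 : ℂ := (((g 1 0 : ℚ) : ℝ) : ℂ)
  set C4 : ℂ := (((g 1 1 : ℚ) : ℝ) : ℂ)
  set R : ℂ → ℂ := fun w => (C1 * w + C2) / (C3 * w + C4) with hR
  have hcoe : ∀ w (hw : w ∈ UU), R w = ((qSMul g hg ⟨w, hw⟩ : UpperHalfPlane) : ℂ) := by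
    intro w hw
    rw [qSMul_coe]
  have hRdiff : DifferentiableOn ℂ R UU := by
    intro w hw
    have hne : C3 * w + C4 ≠ 0 := qSMul_denom_ne_zero g hg ⟨w, hw⟩
    exact DifferentiableAt.differentiableWithinAt (by simp only [hR]; fun_prop (disch := exact hne))
  have hmaps : Set.MapsTo R UU UU := by
    intro w hw
    show 0 < (R w).im
    rw [hcoe w hw]
    exact (qSMul g hg ⟨w, hw⟩).2
  have hcomp : DifferentiableOn ℂ ((j ∘ UpperHalfPlane.ofComplex) ∘ R) UU :=
    hJ.comp hRdiff hmaps
  refine hcomp.congr fun w hw => ?_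
  have h1 : UpperHalfPlane.ofComplex w = ⟨w, hw⟩ := UpperHalfPlane.ofComplex_apply_of_im_pos hw
  simp only [Function.comp_apply, hcoe w hw, UpperHalfPlane.ofComplex_apply, h1]
/-- **Proposition.** For pairwise distinct non-constant `j`-maps `f₁, …, fₙ, f`, the functions
`z ↦ fᵢ(z) - f(z)` are multiplicatively independent modulo constants. -/
theorem multindep_no_const (j : UpperHalfPlane → ℂ) (hj : IsJFunction j)
    (n : ℕ) (hn : 0 < n) (f : Fin n → UpperHalfPlane → ℂ) (f₀ : UpperHalfPlane → ℂ)
    (hf : ∀ i, IsJMap j (f i)) (hf₀ : IsJMap j f₀)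
    (hfnc : ∀ i, ¬ IsConstFun (f i)) (hf₀nc : ¬ IsConstFun f₀)
    (hdist : ∀ i k, i ≠ k → f i ≠ f k) (hdist₀ : ∀ i, f i ≠ f₀) :
    MultIndepModConst (fun i z => f i z - f₀ z) := by
  intro a ha hconst
  obtain ⟨c, hc⟩ := hconst
  have hc' : ∀ z, ∏ i, (f i z - f₀ z) ^ (a i) = c := fun z => by simpa using hc z
  have hrep : ∀ i, ∃ g : Matrix (Fin 2) (Fin 2) ℚ, ∃ hg : 0 < g.det,
      ∀ z, f i z = j (qSMul g hg z) := by
    intro i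
    rcases hf i with ⟨x, _, hx⟩ | ⟨g, hg, hgf⟩
    · exact absurd ⟨x, hx⟩ (hfnc i)
    · exact ⟨g, hg, hgf⟩
  choose g hg hfg using hrep
  obtain ⟨g₀, hg₀, hf₀g⟩ : ∃ g₀ : Matrix (Fin 2) (Fin 2) ℚ, ∃ hg₀ : 0 < g₀.det,
      ∀ z, f₀ z = j (qSMul g₀ hg₀ z) := by
    rcases hf₀ with ⟨x, _, hx⟩ | ⟨g₀, hg₀, hgf⟩
    · exact absurd ⟨x, hx⟩ hf₀nc
    · exact ⟨g₀, hg₀, hgf⟩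
  obtain ⟨i₀, hi₀⟩ := ha
  obtain ⟨z₀, hz₀⟩ := exists_j_eq j hj (g i₀) g₀ (hg i₀) hg₀
  have hfz₀ : f i₀ z₀ - f₀ z₀ = 0 := by rw [hfg i₀ z₀, hf₀g z₀, hz₀, sub_self]
  have hc0 : c = 0 := by
    rw [← hc' z₀]
    apply Finset.prod_eq_zero (Finset.mem_univ i₀)
    rw [hfz₀]
    exact zero_zpow _ hi₀
  have hexists : ∃ z : UpperHalfPlane, ∀ i, f i z - f₀ z ≠ 0 := by
    by_contra hcon
    push_neg at hcon
    set F : Fin n → ℂ → ℂ :=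
      fun i w => f i (UpperHalfPlane.ofComplex w) - f₀ (UpperHalfPlane.ofComplex w) with hF
    have hFan : ∀ i ∈ (Finset.univ : Finset (Fin n)), AnalyticOnNhd ℂ (F i) UU := by
      intro i _
      have hd : DifferentiableOn ℂ (F i) UU := by
        have h1 := jmap_diff j hj (g i) (hg i)
        have h2 := jmap_diff j hj g₀ hg₀
        refine (h1.sub h2).congr fun w hw => ?_
        simp only [hF, hfg i, hf₀g]; rfl
      exact hd.analyticOnNhd isOpen_UU
    have h0 : ∀ w ∈ UU, ∏ i, F i w = 0 := by
      intro w hw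
      obtain ⟨i, hi⟩ := hcon (UpperHalfPlane.ofComplex w)
      exact Finset.prod_eq_zero (Finset.mem_univ i) hi
    obtain ⟨i, _, hi⟩ := factor_vanishes Finset.univ F hFan h0
    apply hdist₀ i
    funext z
    have hzero := hi (z : ℂ) z.2
    simp only [hF, UpperHalfPlane.ofComplex_apply] at hzero
    exact sub_eq_zero.mp hzero
  obtain ⟨z₁, hz₁⟩ := hexists
  have hcne : c ≠ 0 := by
    rw [← hc' z₁]
    exact Finset.prod_ne_zero_iff.mpr fun i _ => zpow_ne_zero _ (hz₁ i)
  exact hcne hc0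

end SingMod
end
end
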